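/- arXiv:1704.07338 — 11 statements merged into one kernel-verified Lean document; each statement's English description precedes it below -/
import Mathlib

section
/- Let α₁, α₂ ∈ (0,1) and let T₁, T₂ : E → E be α₁-averaged and α₂-averaged respectively, i.e. Tᵢ(x) = (1−αᵢ)·x + αᵢ·Gᵢ(x) for nonexpansive maps G₁, G₂. Set α = (α₁ + α₂ − 2α₁α₂)/(1 − α₁α₂). Then α ∈ (0,1) and the composition T₁∘T₂ is α-averaged: there exists a nonexpansive map G : E → E such that (T₁∘T₂)(x) = (1−α)·x + α·G(x) for all x ∈ E. -/
lemma combo_sq {E : Type*} [NormedAddCommGroup E] [InnerProductSpace ℝ E]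
    (t : ℝ) (u v : E) :
    ‖(1-t)•u + t•v‖^2 = (1-t)*‖u‖^2 + t*‖v‖^2 - t*(1-t)*‖u-v‖^2 := by
  have h : ∀ w : E, ‖w‖^2 = (inner ℝ w w : ℝ) := fun w => (real_inner_self_eq_norm_sq w).symm
  simp only [h, inner_add_add_self, inner_sub_sub_self, real_inner_smul_left,
    real_inner_smul_right, real_inner_comm u v]
  ring

lemma avg_ineq {E : Type*} [NormedAddCommGroup E] [InnerProductSpace ℝ E]
    (t : ℝ) (ht : 0 < t) (u g : E) (hg : ‖g‖ ≤ ‖u‖) :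
    ‖(1-t)•u + t•g‖^2 + ((1-t)/t) * ‖u - ((1-t)•u + t•g)‖^2 ≤ ‖u‖^2 := by
  have hd : u - ((1-t)•u + t•g) = t • (u - g) := by module
  have hn : ‖t • (u - g)‖^2 = t^2 * ‖u - g‖^2 := by
    rw [norm_smul, Real.norm_eq_abs, mul_pow, sq_abs]
  have hdiv : (1-t)/t * (t^2 * ‖u-g‖^2) = (1-t)*t*‖u-g‖^2 := by
    field_simp
  rw [hd, hn, combo_sq, hdiv]
  have hsq : ‖g‖^2 ≤ ‖u‖^2 := pow_le_pow_left₀ (norm_nonneg g) hg 2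
  nlinarith [mul_le_mul_of_nonneg_left hsq ht.le]

lemma nonexp_of_ineq {E : Type*} [NormedAddCommGroup E] [InnerProductSpace ℝ E]
    (t : ℝ) (ht : 0 < t) (u g : E)
    (h : ‖(1-t)•u + t•g‖^2 + ((1-t)/t) * ‖u - ((1-t)•u + t•g)‖^2 ≤ ‖u‖^2) :
    ‖g‖ ≤ ‖u‖ := by
  have hd : u - ((1-t)•u + t•g) = t • (u - g) := by module
  have hn : ‖t • (u - g)‖^2 = t^2 * ‖u - g‖^2 := by
    rw [norm_smul, Real.norm_eq_abs, mul_pow, sq_abs]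
  have hdiv : (1-t)/t * (t^2 * ‖u-g‖^2) = (1-t)*t*‖u-g‖^2 := by
    field_simp
  rw [hd, hn, combo_sq, hdiv] at h
  have hsq : ‖g‖^2 ≤ ‖u‖^2 := le_of_mul_le_mul_left (by nlinarith) ht
  exact (pow_le_pow_iff_left₀ (norm_nonneg g) (norm_nonneg u) two_ne_zero).mp hsq

lemma sum_ineq {E : Type*} [NormedAddCommGroup E] [InnerProductSpace ℝ E]
    (s s₁ s₂ : ℝ) (hs : 0 < s) (h1 : s < s₁) (h2 : s < s₂)
    (hprod : (s₁ - s) * (s₂ - s) = s^2) (a b : E) :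
    s * ‖a + b‖^2 ≤ s₁ * ‖a‖^2 + s₂ * ‖b‖^2 := by
  have hab : ‖a + b‖^2 = ‖a‖^2 + 2 * (inner ℝ a b : ℝ) + ‖b‖^2 := norm_add_sq_real a b
  have hcs : (inner ℝ a b : ℝ) ≤ ‖a‖ * ‖b‖ := real_inner_le_norm a b
  rw [hab]
  nlinarith [sq_nonneg ((s₁ - s) * ‖a‖ - s * ‖b‖), mul_pos (sub_pos.2 h1) hs,
    norm_nonneg a, norm_nonneg b, sub_pos.2 h1, sub_pos.2 h2]

/-- Composition of averaged operators is averaged. -/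
theorem composition_of_averaged
    {E : Type*} [NormedAddCommGroup E] [InnerProductSpace ℝ E] [CompleteSpace E]
    (α₁ α₂ : ℝ) (hα₁ : α₁ ∈ Set.Ioo (0:ℝ) 1) (hα₂ : α₂ ∈ Set.Ioo (0:ℝ) 1)
    (T₁ T₂ G₁ G₂ : E → E)
    (hG₁ : ∀ x y, ‖G₁ x - G₁ y‖ ≤ ‖x - y‖)
    (hG₂ : ∀ x y, ‖G₂ x - G₂ y‖ ≤ ‖x - y‖)
    (hT₁ : ∀ x, T₁ x = (1 - α₁) • x + α₁ • G₁ x)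
    (hT₂ : ∀ x, T₂ x = (1 - α₂) • x + α₂ • G₂ x)
    (α : ℝ) (hα : α = (α₁ + α₂ - 2 * α₁ * α₂) / (1 - α₁ * α₂)) :
    α ∈ Set.Ioo (0:ℝ) 1 ∧
      ∃ G : E → E, (∀ x y, ‖G x - G y‖ ≤ ‖x - y‖) ∧
        ∀ x, T₁ (T₂ x) = (1 - α) • x + α • G x := by
  obtain ⟨h1a, h1b⟩ := hα₁
  obtain ⟨h2a, h2b⟩ := hα₂
  have hD : (0:ℝ) < 1 - α₁ * α₂ := by nlinarith
  have hN : (0:ℝ) < α₁ + α₂ - 2 * α₁ * α₂ := by nlinarith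
  have hα0 : 0 < α := by rw [hα]; exact div_pos hN hD
  have hα1 : α < 1 := by rw [hα, div_lt_one hD]; nlinarith
  -- the three "slope" constants
  set s₁ := (1 - α₁) / α₁ with hs₁def
  set s₂ := (1 - α₂) / α₂ with hs₂def
  set s := (1 - α) / α with hsdef
  have hs₁pos : 0 < s₁ := div_pos (by linarith) h1a
  have hs₂pos : 0 < s₂ := div_pos (by linarith) h2a
  have hspos : 0 < s := div_pos (by linarith) hα0
  have hseq : s = (1 - α₁) * (1 - α₂) / (α₁ + α₂ - 2 * α₁ * α₂) := by
    rw [hsdef, div_eq_div_iff hα0.ne' hN.ne', hα]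
    field_simp
    ring
  have hss₁ : s < s₁ := by
    rw [hseq, hs₁def, div_lt_div_iff₀ hN h1a]; nlinarith [mul_pos h2a (mul_pos (sub_pos.mpr h1b) (sub_pos.mpr h1b))]
  have hss₂ : s < s₂ := by
    rw [hseq, hs₂def, div_lt_div_iff₀ hN h2a]; nlinarith [mul_pos h1a (mul_pos (sub_pos.mpr h2b) (sub_pos.mpr h2b))]
  have hprod : (s₁ - s) * (s₂ - s) = s ^ 2 := by
    rw [hseq, hs₁def, hs₂def]; rw [div_sub_div _ _ h1a.ne' hN.ne', div_sub_div _ _ h2a.ne' hN.ne', div_mul_div_comm, div_pow,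
      div_eq_div_iff (mul_ne_zero (mul_ne_zero h1a.ne' hN.ne') (mul_ne_zero h2a.ne' hN.ne')) (pow_ne_zero 2 hN.ne')]; ring
  refine ⟨⟨hα0, hα1⟩, fun z => α⁻¹ • (T₁ (T₂ z) - (1 - α) • z), ?_, ?_⟩
  · intro x y
    set u := x - y with hu
    set v := T₂ x - T₂ y with hv
    set w := T₁ (T₂ x) - T₁ (T₂ y) with hw
    have hveq : v = (1 - α₂) • u + α₂ • (G₂ x - G₂ y) := by
      rw [hv, hu, hT₂ x, hT₂ y]; module
    have hweq : w = (1 - α₁) • v + α₁ • (G₁ (T₂ x) - G₁ (T₂ y)) := by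
      rw [hw, hv, hT₁ (T₂ x), hT₁ (T₂ y)]; module
    have h2 : ‖v‖^2 + s₂ * ‖u - v‖^2 ≤ ‖u‖^2 := by
      rw [hveq]; exact avg_ineq α₂ h2a u _ (hG₂ x y)
    have h1 : ‖w‖^2 + s₁ * ‖v - w‖^2 ≤ ‖v‖^2 := by
      rw [hweq]; exact avg_ineq α₁ h1a v _ (hG₁ (T₂ x) (T₂ y))
    have hsplit : u - w = (v - w) + (u - v) := by abel
    have hkey : ‖w‖^2 + s * ‖u - w‖^2 ≤ ‖u‖^2 := by
      have := sum_ineq s s₁ s₂ hspos hss₁ hss₂ hprod (v - w) (u - v)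
      rw [← hsplit] at this
      linarith
    have hgeq : α⁻¹ • (T₁ (T₂ x) - (1 - α) • x) - α⁻¹ • (T₁ (T₂ y) - (1 - α) • y)
        = α⁻¹ • (w - (1 - α) • u) := by rw [hw, hu]; module
    have hweq2 : w = (1 - α) • u + α • (α⁻¹ • (w - (1 - α) • u)) := by
      rw [smul_smul, mul_inv_cancel₀ hα0.ne', one_smul]; abel
    rw [hgeq]
    refine nonexp_of_ineq α hα0 u _ ?_
    rw [← hweq2]
    exact hkey
  · intro x
    rw [smul_smul, mul_inv_cancel₀ hα0.ne', one_smul]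
    abel
end

section
/- Let α ∈ (0,1), let G : E → E be nonexpansive, define T(x) = (1−α)·x + α·G(x), and let x* be a fixed point of G (equivalently of T). Define the Mann–Krasnosel'skii iteration x_{k+1} = T(x_k) starting from x₁ ∈ E. Then for every N ≥ 1: (1/N)·Σ_{k=1}^{N} ‖G(x_k) − x_k‖² ≤ ‖x₁ − x*‖² / (α(1−α)·N). -/
open RealInnerProductSpace

lemma avg_norm_sq {E : Type*} [NormedAddCommGroup E] [InnerProductSpace ℝ E]
    (α : ℝ) (a b : E) :
    ‖(1 - α) • a + α • b‖ ^ 2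
      = (1 - α) * ‖a‖ ^ 2 + α * ‖b‖ ^ 2 - α * (1 - α) * ‖b - a‖ ^ 2 := by
  rw [← real_inner_self_eq_norm_sq ((1 - α) • a + α • b), ← real_inner_self_eq_norm_sq a,
    ← real_inner_self_eq_norm_sq b, ← real_inner_self_eq_norm_sq (b - a)]
  simp only [inner_add_left, inner_add_right, inner_sub_left, inner_sub_right,
    real_inner_smul_left, real_inner_smul_right, real_inner_comm b a]
  ring

/-- Mann–Krasnosel'skii iteration: mean fixed-point residual bound. -/
theorem mann_krasnoselskii_mean_residual
    {E : Type*} [NormedAddCommGroup E] [InnerProductSpace ℝ E] [CompleteSpace E]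
    (α : ℝ) (hα : α ∈ Set.Ioo (0:ℝ) 1)
    (G : E → E) (hG : ∀ x y, ‖G x - G y‖ ≤ ‖x - y‖)
    (xs : E) (hxs : G xs = xs)
    (x : ℕ → E) (hx : ∀ k ≥ 1, x (k + 1) = (1 - α) • x k + α • G (x k))
    (N : ℕ) (hN : 1 ≤ N) :
    (1 / (N : ℝ)) * ∑ k ∈ Finset.Icc 1 N, ‖G (x k) - x k‖ ^ 2
      ≤ ‖x 1 - xs‖ ^ 2 / (α * (1 - α) * N) := by
  obtain ⟨hα0, hα1⟩ := hα
  have hstep : ∀ k ≥ 1, ‖x (k + 1) - xs‖ ^ 2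
      ≤ ‖x k - xs‖ ^ 2 - α * (1 - α) * ‖G (x k) - x k‖ ^ 2 := by
    intro k hk
    have hrw : x (k + 1) - xs = (1 - α) • (x k - xs) + α • (G (x k) - xs) := by
      rw [hx k hk]; module
    have hne : ‖G (x k) - xs‖ ≤ ‖x k - xs‖ := by
      have := hG (x k) xs; rwa [hxs] at this
    have hkey := avg_norm_sq α (x k - xs) (G (x k) - xs)
    have hsub : G (x k) - xs - (x k - xs) = G (x k) - x k := by abel
    rw [hsub] at hkey
    rw [hrw, hkey]
    have : ‖G (x k) - xs‖ ^ 2 ≤ ‖x k - xs‖ ^ 2 := by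
      apply pow_le_pow_left₀ (norm_nonneg _) hne
    nlinarith
  have hsum : ∀ n : ℕ, 1 ≤ n →
      α * (1 - α) * ∑ k ∈ Finset.Icc 1 n, ‖G (x k) - x k‖ ^ 2
        ≤ ‖x 1 - xs‖ ^ 2 - ‖x (n + 1) - xs‖ ^ 2 := by
    intro n hn
    induction n with
    | zero => omega
    | succ m ih =>
      rcases Nat.eq_or_lt_of_le hn with h | h
      · simp [← h]
        have := hstep 1 le_rfl
        nlinarith
      · have hm : 1 ≤ m := by omega
        have ihm := ih hm
        rw [Finset.sum_Icc_succ_top (by omega : 1 ≤ m + 1)]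
        have := hstep (m + 1) (by omega)
        nlinarith
  have hS := hsum N hN
  have hNpos : (0 : ℝ) < N := by exact_mod_cast hN
  have hαα : (0:ℝ) < α * (1 - α) := by nlinarith
  have hnn : (0:ℝ) ≤ ‖x (N + 1) - xs‖ ^ 2 := sq_nonneg _
  have hSle : α * (1 - α) * ∑ k ∈ Finset.Icc 1 N, ‖G (x k) - x k‖ ^ 2
      ≤ ‖x 1 - xs‖ ^ 2 := by linarith
  rw [one_div, inv_mul_eq_div, div_le_div_iff₀ hNpos (by positivity)]
  nlinarith [sq_nonneg (‖x 1 - xs‖)]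
end

section
/- Let α ∈ (0,1), let G : E → E be nonexpansive, define T(x) = (1−α)·x + α·G(x), and let x* be a fixed point of G. Define x_{k+1} = T(x_k) starting from x₁ ∈ E. Then the last-iterate fixed-point residual satisfies, for every N ≥ 1: ‖G(x_N) − x_N‖ ≤ ‖x₁ − x*‖ / √(α(1−α)·N). -/
private lemma convex_norm_sq_identity
    {E : Type*} [NormedAddCommGroup E] [InnerProductSpace ℝ E]
    (α : ℝ) (a b : E) :
    ‖(1 - α) • a + α • b‖ ^ 2
      = (1 - α) * ‖a‖ ^ 2 + α * ‖b‖ ^ 2 - α * (1 - α) * ‖a - b‖ ^ 2 := by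
  have h : ∀ v : E, ‖v‖ ^ 2 = inner ℝ v v := by
    intro v; rw [real_inner_self_eq_norm_sq]
  rw [h, h, h, h]
  simp only [inner_add_add_self, inner_sub_sub_self, real_inner_smul_left,
    real_inner_smul_right, real_inner_comm a b]
  ring

/-- Mann–Krasnosel'skii iteration: last-iterate fixed-point residual bound. -/
theorem mann_krasnoselskii_last_iterate_residual
    {E : Type*} [NormedAddCommGroup E] [InnerProductSpace ℝ E] [CompleteSpace E]
    (α : ℝ) (hα : α ∈ Set.Ioo (0:ℝ) 1)
    (G : E → E) (hG : ∀ x y, ‖G x - G y‖ ≤ ‖x - y‖)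
    (xs : E) (hxs : G xs = xs)
    (x : ℕ → E) (hx : ∀ k ≥ 1, x (k + 1) = (1 - α) • x k + α • G (x k))
    (N : ℕ) (hN : 1 ≤ N) :
    ‖G (x N) - x N‖ ≤ ‖x 1 - xs‖ / Real.sqrt (α * (1 - α) * N) := by
  obtain ⟨hα0, hα1⟩ := hα
  have hα1' : (0:ℝ) < 1 - α := by linarith
  -- one-step decrease of distance to fixed point
  have step : ∀ k ≥ 1, ‖x (k+1) - xs‖ ^ 2
      ≤ ‖x k - xs‖ ^ 2 - α * (1 - α) * ‖G (x k) - x k‖ ^ 2 := by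
    intro k hk
    have key : x (k+1) - xs = (1 - α) • (x k - xs) + α • (G (x k) - xs) := by
      rw [hx k hk]; module
    have hb : ‖G (x k) - xs‖ ≤ ‖x k - xs‖ := by
      have := hG (x k) xs; rwa [hxs] at this
    have hd : (x k - xs) - (G (x k) - xs) = -(G (x k) - x k) := by abel
    calc ‖x (k+1) - xs‖ ^ 2
        = (1 - α) * ‖x k - xs‖ ^ 2 + α * ‖G (x k) - xs‖ ^ 2
            - α * (1 - α) * ‖(x k - xs) - (G (x k) - xs)‖ ^ 2 := by
          rw [key, convex_norm_sq_identity]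
      _ ≤ ‖x k - xs‖ ^ 2 - α * (1 - α) * ‖G (x k) - x k‖ ^ 2 := by
          rw [hd, norm_neg]
          have h2 : ‖G (x k) - xs‖ ^ 2 ≤ ‖x k - xs‖ ^ 2 :=
            pow_le_pow_left₀ (norm_nonneg _) hb 2
          nlinarith
  -- residual nonincreasing
  have res : ∀ k ≥ 1, ‖G (x (k+1)) - x (k+1)‖ ≤ ‖G (x k) - x k‖ := by
    intro k hk
    have h1 : G (x (k+1)) - x (k+1)
        = (G (x (k+1)) - G (x k)) + (1 - α) • (G (x k) - x k) := by
      rw [hx k hk]; module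
    have h2 : ‖x (k+1) - x k‖ = α * ‖G (x k) - x k‖ := by
      have : x (k+1) - x k = α • (G (x k) - x k) := by rw [hx k hk]; module
      rw [this, norm_smul, Real.norm_eq_abs, abs_of_pos hα0]
    calc ‖G (x (k+1)) - x (k+1)‖
        ≤ ‖G (x (k+1)) - G (x k)‖ + ‖(1 - α) • (G (x k) - x k)‖ := by
          rw [h1]; exact norm_add_le _ _
      _ ≤ ‖x (k+1) - x k‖ + (1 - α) * ‖G (x k) - x k‖ := by
          rw [norm_smul, Real.norm_eq_abs, abs_of_pos hα1']
          exact add_le_add_left (hG _ _) _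
      _ = ‖G (x k) - x k‖ := by rw [h2]; ring
  -- residual monotone (general)
  have resmono : ∀ k ≥ 1, ∀ m, k ≤ m → ‖G (x m) - x m‖ ≤ ‖G (x k) - x k‖ := by
    intro k hk m hkm
    induction m with
    | zero => omega
    | succ n ih =>
        rcases Nat.lt_or_ge k (n+1) with h | h
        · have hn : k ≤ n := by omega
          exact le_trans (res n (by omega)) (ih hn)
        · have : k = n + 1 := by omega
          subst this; exact le_refl _
  -- main induction
  have main : ∀ n ≥ 1, α * (1 - α) * n * ‖G (x n) - x n‖ ^ 2
      ≤ ‖x 1 - xs‖ ^ 2 - ‖x (n+1) - xs‖ ^ 2 := by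
    intro n hn
    induction n with
    | zero => omega
    | succ m ih =>
        rcases Nat.lt_or_ge m 1 with h | h
        · have : m = 0 := by omega
          subst this
          have := step 1 le_rfl
          push_cast
          nlinarith [norm_nonneg (x 2 - xs), sq_nonneg ‖x 2 - xs‖]
        · have ihm := ih h
          have hs := step (m+1) (by omega)
          have hr : ‖G (x (m+1)) - x (m+1)‖ ≤ ‖G (x m) - x m‖ := res m h
          have hr2 : ‖G (x (m+1)) - x (m+1)‖ ^ 2 ≤ ‖G (x m) - x m‖ ^ 2 :=
            pow_le_pow_left₀ (norm_nonneg _) hr 2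
          have hm0 : (0:ℝ) ≤ m := Nat.cast_nonneg m
          have key := mul_le_mul_of_nonneg_left hr2
            (by positivity : (0:ℝ) ≤ α * (1 - α) * m)
          push_cast
          nlinarith
  -- conclude
  have hmain := main N hN
  have hNpos : (0:ℝ) < N := by exact_mod_cast hN
  have hc : (0:ℝ) < α * (1 - α) * N := by positivity
  have hsq : ‖G (x N) - x N‖ ^ 2 ≤ ‖x 1 - xs‖ ^ 2 / (α * (1 - α) * N) := by
    rw [le_div_iff₀ hc]
    nlinarith [sq_nonneg ‖x (N+1) - xs‖]
  have h1 : ‖G (x N) - x N‖ ≤ Real.sqrt (‖x 1 - xs‖ ^ 2 / (α * (1 - α) * N)) := by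
    rw [← Real.sqrt_sq (norm_nonneg (G (x N) - x N))]
    exact Real.sqrt_le_sqrt hsq
  calc ‖G (x N) - x N‖ ≤ Real.sqrt (‖x 1 - xs‖ ^ 2 / (α * (1 - α) * N)) := h1
    _ = ‖x 1 - xs‖ / Real.sqrt (α * (1 - α) * N) := by
        rw [Real.sqrt_div (sq_nonneg _), Real.sqrt_sq (norm_nonneg _)]
end

section
/- [Running Mann–Krasnosel'skii convergence, bounded averaged case] For k = 1, 2, … let α_k ∈ (0,1), let G_k : E → E be nonexpansive, and define T_k(x) = (1−α_k)·x + α_k·G_k(x). Assume: (i) there is X ≥ 0 such that ‖T_k(x)‖ ≤ X for every k and every x ∈ E; (ii) there exist points x*_k with G_k(x*_k) = x*_k and a δ ≥ 0 such that ‖x*_{k+1} − x*_k‖ ≤ δ for all k. Define the running iteration x_{k+1} = T_k(x_k) from x₁ ∈ E. Then for every N ≥ 1: (1/N)·Σ_{k=1}^{N} α_k(1−α_k)·‖G_k(x_k) − x_k‖² ≤ (1/N)·‖x₁ − x*₁‖² + δ·(4X + δ). -/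
lemma avg_norm_sq_identity {E : Type*} [NormedAddCommGroup E] [InnerProductSpace ℝ E]
    (a : ℝ) (u v : E) :
    ‖(1 - a) • u + a • v‖ ^ 2
      = (1 - a) * ‖u‖ ^ 2 + a * ‖v‖ ^ 2 - a * (1 - a) * ‖u - v‖ ^ 2 := by
  have h1 := @norm_add_sq_real E _ _ ((1 - a) • u) (a • v)
  have h2 := @norm_sub_sq_real E _ _ u v
  have h3 : ‖(1 - a) • u‖ ^ 2 = (1 - a) ^ 2 * ‖u‖ ^ 2 := by
    rw [norm_smul]; rw [mul_pow]; rw [Real.norm_eq_abs, sq_abs]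
  have h4 : ‖a • v‖ ^ 2 = a ^ 2 * ‖v‖ ^ 2 := by
    rw [norm_smul]; rw [mul_pow]; rw [Real.norm_eq_abs, sq_abs]
  have h5 : inner ℝ ((1 - a) • u) (a • v) = (1 - a) * (a * (inner ℝ u v : ℝ)) := by
    rw [real_inner_smul_left, real_inner_smul_right]
  rw [h3, h4, h5] at h1
  nlinarith [h1, h2]

/-- Running Mann–Krasnosel'skii algorithm convergence, bounded averaged case. -/
theorem running_mann_krasnoselskii_bounded_averaged
    {E : Type*} [NormedAddCommGroup E] [InnerProductSpace ℝ E] [CompleteSpace E]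
    (α : ℕ → ℝ) (hα : ∀ k, α k ∈ Set.Ioo (0:ℝ) 1)
    (G : ℕ → E → E) (hG : ∀ k x y, ‖G k x - G k y‖ ≤ ‖x - y‖)
    (T : ℕ → E → E) (hT : ∀ k x, T k x = (1 - α k) • x + α k • G k x)
    (X : ℝ) (hX : 0 ≤ X) (hbound : ∀ k x, ‖T k x‖ ≤ X)
    (xs : ℕ → E) (hfix : ∀ k, G k (xs k) = xs k)
    (δ : ℝ) (hδ : 0 ≤ δ) (hdrift : ∀ k, ‖xs (k + 1) - xs k‖ ≤ δ)
    (x : ℕ → E) (hx : ∀ k ≥ 1, x (k + 1) = T k (x k))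
    (N : ℕ) (hN : 1 ≤ N) :
    (1 / (N : ℝ)) * ∑ k ∈ Finset.Icc 1 N, α k * (1 - α k) * ‖G k (x k) - x k‖ ^ 2
      ≤ (1 / (N : ℝ)) * ‖x 1 - xs 1‖ ^ 2 + δ * (4 * X + δ) := by
  set c : ℝ := δ * (4 * X + δ) with hc
  have hc0 : 0 ≤ c := by positivity
  set f : ℕ → ℝ := fun k => ‖x k - xs k‖ ^ 2 with hf
  -- fixed points of T
  have hTfix : ∀ k, T k (xs k) = xs k := by
    intro k
    rw [hT, hfix]
    rw [← add_smul]
    simp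
  -- per-step inequality
  have hstep : ∀ k ≥ 1, α k * (1 - α k) * ‖G k (x k) - x k‖ ^ 2 ≤ f k - f (k + 1) + c := by
    intro k hk
    obtain ⟨hα0, hα1⟩ := hα k
    set u : E := x k - xs k
    set v : E := G k (x k) - xs k
    have hTx : x (k + 1) - xs k = (1 - α k) • u + α k • v := by
      rw [hx k hk, hT]
      simp only [u, v, smul_sub]
      module
    have hid : ‖x (k + 1) - xs k‖ ^ 2
        = (1 - α k) * ‖u‖ ^ 2 + α k * ‖v‖ ^ 2 - α k * (1 - α k) * ‖u - v‖ ^ 2 := by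
      rw [hTx, avg_norm_sq_identity]
    have huv : u - v = -(G k (x k) - x k) := by simp only [u, v]; abel
    have huv' : ‖u - v‖ = ‖G k (x k) - x k‖ := by rw [huv, norm_neg]
    have hvu : ‖v‖ ≤ ‖u‖ := by
      have := hG k (x k) (xs k)
      rwa [hfix] at this
    have key : ‖x (k + 1) - xs k‖ ^ 2
        ≤ ‖u‖ ^ 2 - α k * (1 - α k) * ‖G k (x k) - x k‖ ^ 2 := by
      have hvu2 : ‖v‖ ^ 2 ≤ ‖u‖ ^ 2 := pow_le_pow_left₀ (norm_nonneg v) hvu 2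
      rw [hid, huv']
      nlinarith [hvu2, hα0, hα1]
    -- bound ‖x (k+1) - xs k‖ ≤ 2X
    have hb1 : ‖x (k + 1)‖ ≤ X := by rw [hx k hk]; exact hbound k (x k)
    have hb2 : ‖xs k‖ ≤ X := by rw [← hTfix k]; exact hbound k (xs k)
    have hb : ‖x (k + 1) - xs k‖ ≤ 2 * X := by
      calc ‖x (k + 1) - xs k‖ ≤ ‖x (k + 1)‖ + ‖xs k‖ := norm_sub_le _ _
        _ ≤ 2 * X := by linarith
    -- drift
    have hdr : ‖x (k + 1) - xs (k + 1)‖ ≤ ‖x (k + 1) - xs k‖ + δ := by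
      calc ‖x (k + 1) - xs (k + 1)‖
          ≤ ‖x (k + 1) - xs k‖ + ‖xs k - xs (k + 1)‖ := norm_sub_le_norm_sub_add_norm_sub _ _ _
        _ ≤ ‖x (k + 1) - xs k‖ + δ := by
            have := hdrift k
            rw [norm_sub_rev] at this
            linarith
    have hfk1 : f (k + 1) ≤ ‖x (k + 1) - xs k‖ ^ 2 + c := by
      have h0 : (0:ℝ) ≤ ‖x (k + 1) - xs k‖ + δ := by positivity
      have := pow_le_pow_left₀ (norm_nonneg _) hdr 2
      simp only [f]
      nlinarith [norm_nonneg (x (k + 1) - xs k)]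
    simp only [f] at *
    nlinarith [key, hfk1]
  -- telescoping sum
  have hsum : ∑ k ∈ Finset.Icc 1 N, α k * (1 - α k) * ‖G k (x k) - x k‖ ^ 2
      ≤ f 1 + N * c := by
    have h1 : ∑ k ∈ Finset.Icc 1 N, α k * (1 - α k) * ‖G k (x k) - x k‖ ^ 2
        ≤ ∑ k ∈ Finset.Icc 1 N, (f k - f (k + 1) + c) := by
      apply Finset.sum_le_sum
      intro k hk
      exact hstep k (Finset.mem_Icc.mp hk).1
    have h2 : ∑ k ∈ Finset.Icc 1 N, (f k - f (k + 1) + c)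
        = (f 1 - f (N + 1)) + N * c := by
      rw [Finset.sum_add_distrib, Finset.sum_const, Nat.card_Icc]
      have h3 : ∑ k ∈ Finset.Icc 1 N, (f k - f (k + 1)) = f 1 - f (N + 1) := by
        rw [← Finset.Ico_add_one_right_eq_Icc, Finset.sum_Ico_eq_sum_range]
        have hN1 : N + 1 - 1 = N := by omega
        rw [hN1]
        have h := Finset.sum_range_sub' (fun i => f (1 + i)) N
        simp only [Nat.add_zero] at h
        calc ∑ i ∈ Finset.range N, (f (1 + i) - f (1 + i + 1))
            = ∑ i ∈ Finset.range N, (f (1 + i) - f (1 + (i + 1))) := by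
              apply Finset.sum_congr rfl; intro i _; rw [Nat.add_assoc]
          _ = f 1 - f (1 + N) := h
          _ = f 1 - f (N + 1) := by rw [Nat.add_comm]
      rw [h3]
      have : N + 1 - 1 = N := by omega
      rw [this]
      ring
    have h4 : 0 ≤ f (N + 1) := by positivity
    calc _ ≤ (f 1 - f (N + 1)) + N * c := h1.trans h2.le
      _ ≤ f 1 + N * c := by linarith
  -- divide by N
  have hN0 : (0:ℝ) < N := by exact_mod_cast hN
  have := mul_le_mul_of_nonneg_left hsum (by positivity : (0:ℝ) ≤ 1 / N)
  calc (1 / (N : ℝ)) * ∑ k ∈ Finset.Icc 1 N, α k * (1 - α k) * ‖G k (x k) - x k‖ ^ 2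
      ≤ (1 / N) * (f 1 + N * c) := this
    _ = (1 / N) * f 1 + c := by field_simp
    _ = (1 / (N : ℝ)) * ‖x 1 - xs 1‖ ^ 2 + δ * (4 * X + δ) := by rw [hf, hc]
end

section
/- [Running Mann–Krasnosel'skii convergence, contractive case] For k = 1, 2, … let T_k : E → E be a contraction with Lipschitz constant L_k ∈ (0,1), let x*_k be the fixed point of T_k, and assume ‖x*_{k+1} − x*_k‖ ≤ δ for all k, where δ ≥ 0. Let L̄ ∈ (0,1) satisfy L_k ≤ L̄ for all k. Define the running iteration x_{k+1} = T_k(x_k) from x₁ ∈ E. Then for every k ≥ 1: ‖x_k − x*_k‖ ≤ (L₁·L₂⋯L_{k−1})·‖x₁ − x*₁‖ + δ·(1 − L̄^{k−1})/(1 − L̄). -/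
/-- Running Mann–Krasnosel'skii algorithm convergence, contractive case. -/
theorem running_mann_krasnoselskii_contractive
    {E : Type*} [NormedAddCommGroup E] [InnerProductSpace ℝ E] [CompleteSpace E]
    (L : ℕ → ℝ) (hL : ∀ k, L k ∈ Set.Ioo (0:ℝ) 1)
    (T : ℕ → E → E) (hT : ∀ k x y, ‖T k x - T k y‖ ≤ L k * ‖x - y‖)
    (xs : ℕ → E) (hfix : ∀ k, T k (xs k) = xs k)
    (δ : ℝ) (hδ : 0 ≤ δ) (hdrift : ∀ k, ‖xs (k + 1) - xs k‖ ≤ δ)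
    (Lbar : ℝ) (hLbar : Lbar ∈ Set.Ioo (0:ℝ) 1) (hLle : ∀ k, L k ≤ Lbar)
    (x : ℕ → E) (hx : ∀ k ≥ 1, x (k + 1) = T k (x k))
    (k : ℕ) (hk : 1 ≤ k) :
    ‖x k - xs k‖ ≤ (∏ i ∈ Finset.Icc 1 (k - 1), L i) * ‖x 1 - xs 1‖
      + δ * (1 - Lbar ^ (k - 1)) / (1 - Lbar) := by
  induction k, hk using Nat.le_induction with
  | base => simp
  | succ k hk ih =>
    have hLb0 := hLbar.1
    have hLb1 := hLbar.2
    have h1L : (0:ℝ) < 1 - Lbar := by linarith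
    have hLk0 := (hL k).1
    have key : ‖x (k+1) - xs (k+1)‖ ≤ L k * ‖x k - xs k‖ + δ := by
      calc ‖x (k+1) - xs (k+1)‖
          ≤ ‖x (k+1) - xs k‖ + ‖xs k - xs (k+1)‖ := norm_sub_le_norm_sub_add_norm_sub _ _ _
        _ ≤ L k * ‖x k - xs k‖ + δ := by
            have h1 : ‖x (k+1) - xs k‖ ≤ L k * ‖x k - xs k‖ := by
              rw [hx k hk]
              calc ‖T k (x k) - xs k‖ = ‖T k (x k) - T k (xs k)‖ := by rw [hfix k]
                _ ≤ L k * ‖x k - xs k‖ := hT k _ _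
            have h2 : ‖xs k - xs (k+1)‖ ≤ δ := by
              rw [norm_sub_rev]; exact hdrift k
            linarith
    have step : L k * ‖x k - xs k‖ + δ ≤
        (∏ i ∈ Finset.Icc 1 (k+1-1), L i) * ‖x 1 - xs 1‖
          + δ * (1 - Lbar ^ (k+1-1)) / (1 - Lbar) := by
      simp only [Nat.add_sub_cancel]
      have hprod : (∏ i ∈ Finset.Icc 1 k, L i) = (∏ i ∈ Finset.Icc 1 (k-1), L i) * L k := by
        have : k = (k - 1) + 1 := (Nat.succ_pred_eq_of_pos hk).symm
        rw [this, Finset.prod_Icc_succ_top (by omega)]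
        congr 1 <;> omega
      have hmul : L k * ‖x k - xs k‖ ≤
          L k * ((∏ i ∈ Finset.Icc 1 (k-1), L i) * ‖x 1 - xs 1‖
            + δ * (1 - Lbar ^ (k-1)) / (1 - Lbar)) :=
        mul_le_mul_of_nonneg_left ih hLk0.le
      have hgeom : L k * (δ * (1 - Lbar ^ (k-1)) / (1 - Lbar)) + δ
          ≤ δ * (1 - Lbar ^ k) / (1 - Lbar) := by
        have hpk : Lbar ^ (k-1) ≤ 1 := pow_le_one₀ hLb0.le hLb1.le
        have hgnn : 0 ≤ δ * (1 - Lbar ^ (k-1)) / (1 - Lbar) := div_nonneg (mul_nonneg hδ (by linarith)) h1L.le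
        have h1 : L k * (δ * (1 - Lbar ^ (k-1)) / (1 - Lbar))
            ≤ Lbar * (δ * (1 - Lbar ^ (k-1)) / (1 - Lbar)) :=
          mul_le_mul_of_nonneg_right (hLle k) hgnn
        have hkk : Lbar ^ k = Lbar ^ (k-1) * Lbar := by
          rw [← pow_succ]; congr 1; omega
        have : Lbar * (δ * (1 - Lbar ^ (k-1)) / (1 - Lbar)) + δ
            = δ * (1 - Lbar ^ k) / (1 - Lbar) := by
          field_simp
          rw [hkk]; ring
        linarith
      calc L k * ‖x k - xs k‖ + δ
          ≤ L k * ((∏ i ∈ Finset.Icc 1 (k-1), L i) * ‖x 1 - xs 1‖)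
            + (L k * (δ * (1 - Lbar ^ (k-1)) / (1 - Lbar)) + δ) := by
            rw [mul_add] at hmul; linarith
        _ ≤ (∏ i ∈ Finset.Icc 1 k, L i) * ‖x 1 - xs 1‖ + δ * (1 - Lbar ^ k) / (1 - Lbar) := by
            rw [hprod]
            have : L k * ((∏ i ∈ Finset.Icc 1 (k-1), L i) * ‖x 1 - xs 1‖)
                = (∏ i ∈ Finset.Icc 1 (k-1), L i) * L k * ‖x 1 - xs 1‖ := by ring
            rw [this]
            linarith [hgeom]
    linarith
end

section
/- [Running Mann–Krasnosel'skii 'practical' convergence] For k = 1, 2, … let α_k ∈ (0,1), let G_k : E → E be nonexpansive, define T_k(x) = (1−α_k)·x + α_k·G_k(x), and let x*_k satisfy G_k(x*_k) = x*_k. Define x_{k+1} = T_k(x_k) from x₁ ∈ E, and suppose there is d ≥ 0 such that the generated sequence satisfies ‖x_{k+1} − x*_{k+1}‖² ≤ ‖x_{k+1} − x*_k‖² + d² for all k. Then for every N ≥ 1: (1/N)·Σ_{k=1}^{N} α_k(1−α_k)·‖G_k(x_k) − x_k‖² ≤ (1/N)·‖x₁ − x*₁‖² + d². -/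
open RealInnerProductSpace

lemma convex_comb_norm_sq {E : Type*} [NormedAddCommGroup E] [InnerProductSpace ℝ E]
    (t : ℝ) (a b : E) :
    ‖(1 - t) • a + t • b‖ ^ 2
      = (1 - t) * ‖a‖ ^ 2 + t * ‖b‖ ^ 2 - t * (1 - t) * ‖a - b‖ ^ 2 := by
  have h : ∀ v : E, ‖v‖ ^ 2 = ⟪v, v⟫ := fun v => (real_inner_self_eq_norm_sq v).symm
  rw [h, h, h, h]
  simp only [inner_add_left, inner_add_right, inner_sub_left, inner_sub_right,
    real_inner_smul_left, real_inner_smul_right]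
  rw [real_inner_comm b a]
  ring

/-- Running Mann–Krasnosel'skii algorithm "practical" convergence. -/
theorem running_mann_krasnoselskii_practical
    {E : Type*} [NormedAddCommGroup E] [InnerProductSpace ℝ E] [CompleteSpace E]
    (α : ℕ → ℝ) (hα : ∀ k, α k ∈ Set.Ioo (0:ℝ) 1)
    (G : ℕ → E → E) (hG : ∀ k x y, ‖G k x - G k y‖ ≤ ‖x - y‖)
    (T : ℕ → E → E) (hT : ∀ k x, T k x = (1 - α k) • x + α k • G k x)
    (xs : ℕ → E) (hfix : ∀ k, G k (xs k) = xs k)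
    (x : ℕ → E) (hx : ∀ k ≥ 1, x (k + 1) = T k (x k))
    (d : ℝ) (hd : 0 ≤ d)
    (hsq : ∀ k, ‖x (k + 1) - xs (k + 1)‖ ^ 2 ≤ ‖x (k + 1) - xs k‖ ^ 2 + d ^ 2)
    (N : ℕ) (hN : 1 ≤ N) :
    (1 / (N : ℝ)) * ∑ k ∈ Finset.Icc 1 N, α k * (1 - α k) * ‖G k (x k) - x k‖ ^ 2
      ≤ (1 / (N : ℝ)) * ‖x 1 - xs 1‖ ^ 2 + d ^ 2 := by
  set f : ℕ → ℝ := fun k => ‖x k - xs k‖ ^ 2 with hf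
  have key : ∀ k, 1 ≤ k →
      α k * (1 - α k) * ‖G k (x k) - x k‖ ^ 2 ≤ f k - f (k + 1) + d ^ 2 := by
    intro k hk
    have hα0 := (hα k).1
    have hα1 := (hα k).2
    have hstep : ‖x (k + 1) - xs k‖ ^ 2
        ≤ f k - α k * (1 - α k) * ‖G k (x k) - x k‖ ^ 2 := by
      have hxk : x (k + 1) - xs k
          = (1 - α k) • (x k - xs k) + α k • (G k (x k) - xs k) := by
        rw [hx k hk, hT]
        module
      rw [hxk, convex_comb_norm_sq]
      have hle : ‖G k (x k) - xs k‖ ^ 2 ≤ ‖x k - xs k‖ ^ 2 := by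
        have := hG k (x k) (xs k)
        rw [hfix] at this
        exact pow_le_pow_left₀ (norm_nonneg _) this 2
      have hdiff : (x k - xs k) - (G k (x k) - xs k) = x k - G k (x k) := by abel
      rw [hdiff]
      have hnorm : ‖x k - G k (x k)‖ = ‖G k (x k) - x k‖ := by
        rw [← norm_neg]; congr 1; abel
      rw [hnorm]
      simp only [hf]
      nlinarith [hα0, hα1, hle]
    have h2 := hsq k
    simp only [hf] at hstep ⊢
    nlinarith [h2, hstep]
  have hsum : ∑ k ∈ Finset.Icc 1 N, α k * (1 - α k) * ‖G k (x k) - x k‖ ^ 2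
      ≤ f 1 + N * d ^ 2 := by
    have h1 : ∑ k ∈ Finset.Icc 1 N, α k * (1 - α k) * ‖G k (x k) - x k‖ ^ 2
        ≤ ∑ k ∈ Finset.Icc 1 N, (f k - f (k + 1) + d ^ 2) := by
      apply Finset.sum_le_sum
      intro k hk
      exact key k (Finset.mem_Icc.mp hk).1
    have h2 : ∑ k ∈ Finset.Icc 1 N, (f k - f (k + 1) + d ^ 2)
        = f 1 - f (N + 1) + N * d ^ 2 := by
      rw [Finset.sum_add_distrib]
      have hcard : (Finset.Icc 1 N).card = N := by simp
      rw [Finset.sum_const, hcard, nsmul_eq_mul]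
      congr 1
      have tele : ∀ n : ℕ, ∑ k ∈ Finset.Icc 1 n, (f k - f (k + 1)) = f 1 - f (n + 1) := by
        intro n
        induction n with
        | zero => simp
        | succ m ih =>
          rw [Finset.sum_Icc_succ_top (Nat.one_le_iff_ne_zero.mpr (Nat.succ_ne_zero m)), ih]
          ring
      exact tele N
    have h3 : 0 ≤ f (N + 1) := by positivity
    linarith
  have hNpos : (0:ℝ) < N := by exact_mod_cast Nat.lt_of_lt_of_le Nat.zero_lt_one hN
  have := mul_le_mul_of_nonneg_left hsum (le_of_lt (one_div_pos.mpr hNpos))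
  calc (1 / (N : ℝ)) * ∑ k ∈ Finset.Icc 1 N, α k * (1 - α k) * ‖G k (x k) - x k‖ ^ 2
      ≤ (1 / (N : ℝ)) * (f 1 + N * d ^ 2) := this
    _ = (1 / (N : ℝ)) * ‖x 1 - xs 1‖ ^ 2 + d ^ 2 := by
        field_simp
        ring
end

section
/- [Asymptotically vanishing variations, contractive case] For k = 1, 2, … let T_k : E → E be a contraction with Lipschitz constant L_k ≤ L̄ for some L̄ ∈ (0,1), let x*_k be the fixed point of T_k, and suppose there are nonnegative reals δ_k with ‖x*_{k+1} − x*_k‖ ≤ δ_k and Σ_{k=1}^{∞} δ_k < ∞. Define x_{k+1} = T_k(x_k) from x₁ ∈ E. Then ‖x_k − x*_k‖ → 0 as k → ∞. -/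
/-- Asymptotically vanishing variations, contractive case. -/
theorem running_mann_krasnoselskii_vanishing_contractive
    {E : Type*} [NormedAddCommGroup E] [InnerProductSpace ℝ E] [CompleteSpace E]
    (L : ℕ → ℝ) (Lbar : ℝ) (hLbar : Lbar ∈ Set.Ioo (0:ℝ) 1)
    (hL : ∀ k, L k ∈ Set.Ioo (0:ℝ) 1) (hLle : ∀ k, L k ≤ Lbar)
    (T : ℕ → E → E) (hT : ∀ k x y, ‖T k x - T k y‖ ≤ L k * ‖x - y‖)
    (xs : ℕ → E) (hfix : ∀ k, T k (xs k) = xs k)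
    (δ : ℕ → ℝ) (hδ : ∀ k, 0 ≤ δ k)
    (hdrift : ∀ k, ‖xs (k + 1) - xs k‖ ≤ δ k)
    (hsum : Summable δ)
    (x : ℕ → E) (hx : ∀ k ≥ 1, x (k + 1) = T k (x k)) :
    Filter.Tendsto (fun k => ‖x k - xs k‖) Filter.atTop (nhds 0) := by
  obtain ⟨hq0, hq1⟩ := hLbar
  set q := Lbar with hq
  set a : ℕ → ℝ := fun k => ‖x k - xs k‖ with ha
  have ha0 : ∀ k, 0 ≤ a k := fun k => norm_nonneg _
  -- key recursion
  have key : ∀ k ≥ 1, a (k + 1) ≤ q * a k + δ k := by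
    intro k hk
    have h1 : x (k + 1) - xs (k + 1) = (T k (x k) - T k (xs k)) + (xs k - xs (k + 1)) := by
      rw [hx k hk, hfix k]; abel
    calc a (k + 1) = ‖(T k (x k) - T k (xs k)) + (xs k - xs (k + 1))‖ := by rw [ha]; simp [h1]
      _ ≤ ‖T k (x k) - T k (xs k)‖ + ‖xs k - xs (k + 1)‖ := norm_add_le _ _
      _ ≤ L k * a k + δ k := by
          gcongr
          · exact hT k _ _
          · rw [norm_sub_rev]; exact hdrift k
      _ ≤ q * a k + δ k := by nlinarith [ha0 k, hLle k, (hL k).1.le]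
  -- tail sums
  set S : ℕ → ℝ := fun n => ∑' i, δ (i + n) with hS
  have hSsummable : ∀ n, Summable fun i => δ (i + n) := fun n =>
    (summable_nat_add_iff n).mpr hsum
  have hS0 : ∀ n, 0 ≤ S n := fun n => tsum_nonneg fun i => hδ _
  have hSrec : ∀ n, S n = δ n + S (n + 1) := by
    intro n
    simp only [hS]
    rw [Summable.tsum_eq_zero_add (hSsummable n), zero_add]
    congr 1
    exact tsum_congr fun b => by rw [add_assoc, add_comm 1 n]
  have hStend : Filter.Tendsto S Filter.atTop (nhds 0) := by
    simpa [hS] using tendsto_sum_nat_add δ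
  have h1q : (0:ℝ) < 1 - q := by linarith
  set b : ℕ → ℝ := fun n => a n + S n / (1 - q) with hb
  have hbmono : ∀ n ≥ 1, b (n + 1) ≤ b n := by
    intro n hn
    have h1 : a (n + 1) ≤ q * a n + δ n := key n hn
    have h2 : q * a n ≤ a n := by nlinarith [ha0 n]
    have h3 : δ n ≤ δ n / (1 - q) := by
      rw [le_div_iff₀ h1q]; nlinarith [hδ n]
    have h4 : S n / (1 - q) = δ n / (1 - q) + S (n + 1) / (1 - q) := by
      rw [hSrec n]; ring
    simp only [hb]
    rw [h4]; linarith
  -- c n = b (n+1) is antitone, bounded below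
  set c : ℕ → ℝ := fun n => b (n + 1) with hc
  have hcanti : Antitone c := antitone_nat_of_succ_le fun n => hbmono (n + 1) (Nat.le_add_left 1 n)
  have hcbdd : BddBelow (Set.range c) := by
    refine ⟨0, ?_⟩
    rintro _ ⟨n, rfl⟩
    have := hS0 (n + 1)
    have := ha0 (n + 1)
    have : 0 ≤ S (n + 1) / (1 - q) := div_nonneg (hS0 _) h1q.le
    simp only [hc, hb]
    linarith [ha0 (n + 1)]
  have hctend : Filter.Tendsto c Filter.atTop (nhds (⨅ n, c n)) :=
    tendsto_atTop_ciInf hcanti hcbdd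
  set l : ℝ := ⨅ n, c n with hl
  -- a (n+1) tendsto l
  have hStend' : Filter.Tendsto (fun n => S (n + 1) / (1 - q)) Filter.atTop (nhds 0) := by
    have : Filter.Tendsto (fun n => S (n + 1)) Filter.atTop (nhds 0) :=
      hStend.comp (Filter.tendsto_add_atTop_nat 1)
    simpa using this.div_const (1 - q)
  have hatend' : Filter.Tendsto (fun n => a (n + 1)) Filter.atTop (nhds l) := by
    have : Filter.Tendsto (fun n => c n - S (n + 1) / (1 - q)) Filter.atTop (nhds (l - 0)) :=
      hctend.sub hStend'
    simpa [hc, hb] using this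
  have hatend : Filter.Tendsto a Filter.atTop (nhds l) :=
    (Filter.tendsto_add_atTop_iff_nat 1).mp hatend'
  -- l ≥ 0
  have hl0 : 0 ≤ l := le_of_tendsto_of_tendsto' tendsto_const_nhds hatend fun n => ha0 n
  -- l ≤ q l : take limits in key
  have hrhs : Filter.Tendsto (fun n => q * a n + δ n) Filter.atTop (nhds (q * l + 0)) :=
    (hatend.const_mul q).add hsum.tendsto_atTop_zero
  have hle : l ≤ q * l + 0 := by
    refine le_of_tendsto_of_tendsto' (hatend'.comp (Filter.tendsto_add_atTop_nat 1))
      (hrhs.comp (Filter.tendsto_add_atTop_nat 1)) ?_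
    intro n
    simpa [Function.comp] using key (n + 1) (Nat.le_add_left 1 n)
  have hl00 : l = 0 := by nlinarith
  rw [hl00] at hatend
  exact hatend
end

section
/- Let f : E → ℝ be convex and differentiable with gradient ∇f that is Lipschitz continuous with constant M > 0, and let λ ∈ (0, 2/M). Then the gradient-step map x ↦ x − λ·∇f(x) is (λM/2)-averaged: the map x ↦ x − (2/M)·∇f(x) is nonexpansive, and x − λ·∇f(x) = (1 − λM/2)·x + (λM/2)·(x − (2/M)·∇f(x)) for all x ∈ E. -/
open Set InnerProductSpace

local notation "⟪" x ", " y "⟫" => @inner ℝ _ _ x y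

section Aux

variable {E : Type*} [NormedAddCommGroup E] [InnerProductSpace ℝ E] [CompleteSpace E]

/-- Derivative of `f` along a line. -/
lemma aux_line_hasDerivAt (f : E → ℝ) (f' : E → E)
    (hgrad : ∀ x, HasGradientAt f (f' x) x) (x v : E) (t : ℝ) :
    HasDerivAt (fun s : ℝ => f (x + s • v)) ⟪f' (x + t • v), v⟫ t := by
  have h1 : HasDerivAt (fun s : ℝ => x + s • v) v t := by
    simpa using ((hasDerivAt_id t).smul_const v).const_add x
  have h2 := (hgrad (x + t • v)).hasFDerivAt
  have h3 := h2.comp_hasDerivAt t h1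
  simp [InnerProductSpace.toDual_apply_apply] at h3
  exact h3

/-- Convexity lower bound: `f x + ⟪f' x, y - x⟫ ≤ f y`. -/
lemma aux_convex_lb (f : E → ℝ) (f' : E → E) (hconv : ConvexOn ℝ Set.univ f)
    (hgrad : ∀ x, HasGradientAt f (f' x) x) (x y : E) :
    f x + ⟪f' x, y - x⟫ ≤ f y := by
  set v := y - x with hv
  have hφ : ConvexOn ℝ Set.univ (fun t : ℝ => f (x + t • v)) := by
    have hmap := hconv.comp_affineMap (AffineMap.lineMap x y)
    have : (fun t : ℝ => f (x + t • v)) = (f ∘ (AffineMap.lineMap x y)) := by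
      funext t
      simp [AffineMap.lineMap_apply, hv]
      rw [add_comm]
    rw [this]
    simpa using hmap
  have hd := aux_line_hasDerivAt f f' hgrad x v 0
  simp only [zero_smul, add_zero] at hd
  have hs := hφ.le_slope_of_hasDerivAt (mem_univ (0:ℝ)) (mem_univ (1:ℝ)) one_pos hd
  have hslope : slope (fun t : ℝ => f (x + t • v)) 0 1 = f y - f x := by
    simp [slope_def_field, hv]
  rw [hslope] at hs
  linarith

/-- Descent lemma. -/
lemma aux_descent (f : E → ℝ) (f' : E → E)
    (hgrad : ∀ x, HasGradientAt f (f' x) x)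
    (M : ℝ) (hM : 0 < M) (hlip : ∀ x y, ‖f' x - f' y‖ ≤ M * ‖x - y‖) (x y : E) :
    f y ≤ f x + ⟪f' x, y - x⟫ + M / 2 * ‖y - x‖ ^ 2 := by
  set v := y - x with hv
  set g : ℝ → ℝ := fun t => f (x + t • v) - t * ⟪f' x, v⟫ - M / 2 * t ^ 2 * ‖v‖ ^ 2 with hg
  have hder : ∀ t : ℝ, HasDerivAt g
      (⟪f' (x + t • v), v⟫ - ⟪f' x, v⟫ - M * t * ‖v‖ ^ 2) t := by
    intro t
    have h1 := aux_line_hasDerivAt f f' hgrad x v t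
    have h2 : HasDerivAt (fun s : ℝ => s * ⟪f' x, v⟫) ⟪f' x, v⟫ t := by
      simpa using (hasDerivAt_id t).mul_const ⟪f' x, v⟫
    have h3 : HasDerivAt (fun s : ℝ => M / 2 * s ^ 2 * ‖v‖ ^ 2) (M * t * ‖v‖ ^ 2) t := by
      have := ((hasDerivAt_pow 2 t).const_mul (M / 2)).mul_const (‖v‖ ^ 2)
      refine this.congr_deriv ?_
      push_cast; ring
    exact (h1.sub h2).sub h3
  have hanti : AntitoneOn g (Icc (0:ℝ) 1) := by
    apply antitoneOn_of_hasDerivWithinAt_nonpos (convex_Icc 0 1)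
      (fun t _ => ((hder t).continuousAt.continuousWithinAt))
      (fun t _ => ((hder t).hasDerivWithinAt))
    intro t ht
    rw [interior_Icc] at ht
    have hcs : ⟪f' (x + t • v) - f' x, v⟫ ≤ ‖f' (x + t • v) - f' x‖ * ‖v‖ :=
      real_inner_le_norm _ _
    have hl : ‖f' (x + t • v) - f' x‖ ≤ M * (t * ‖v‖) := by
      have := hlip (x + t • v) x
      simpa [norm_smul, abs_of_pos ht.1] using this
    have hv0 : (0:ℝ) ≤ ‖v‖ := norm_nonneg _
    have : ⟪f' (x + t • v) - f' x, v⟫ ≤ M * t * ‖v‖ ^ 2 := by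
      calc ⟪f' (x + t • v) - f' x, v⟫ ≤ ‖f' (x + t • v) - f' x‖ * ‖v‖ := hcs
        _ ≤ M * (t * ‖v‖) * ‖v‖ := by
            apply mul_le_mul_of_nonneg_right hl hv0
        _ = M * t * ‖v‖ ^ 2 := by ring
    rw [inner_sub_left] at this
    linarith
  have h01 := hanti (left_mem_Icc.2 zero_le_one) (right_mem_Icc.2 zero_le_one) zero_le_one
  have hgy : x + (1:ℝ) • v = y := by simp [hv]
  simp only [hg, hgy, zero_smul, add_zero, zero_mul, one_mul, one_pow] at h01
  -- h01 : f y - ⟪f' x, v⟫ - M/2 * ‖v‖^2 ≤ f x - 0 - 0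
  push_cast at h01
  nlinarith [h01]

/-- One-sided Baillon–Haddad inequality. -/
lemma aux_bh_one (f : E → ℝ) (f' : E → E) (hconv : ConvexOn ℝ Set.univ f)
    (hgrad : ∀ x, HasGradientAt f (f' x) x)
    (M : ℝ) (hM : 0 < M) (hlip : ∀ x y, ‖f' x - f' y‖ ≤ M * ‖x - y‖) (x y : E) :
    f y + ⟪f' y, x - y⟫ + 1 / (2 * M) * ‖f' x - f' y‖ ^ 2 ≤ f x := by
  set d := f' x - f' y with hd
  set z := x - (1 / M) • d with hz
  have hC := aux_convex_lb f f' hconv hgrad y z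
  have hB := aux_descent f f' hgrad M hM hlip x z
  have hzy : z - y = (x - y) - (1 / M) • d := by rw [hz]; abel
  have hzx : z - x = -((1 / M) • d) := by rw [hz]; abel
  have e1 : ⟪f' y, z - y⟫ = ⟪f' y, x - y⟫ - (1 / M) * ⟪f' y, d⟫ := by
    rw [hzy, inner_sub_right, real_inner_smul_right]
  have e2 : ⟪f' x, z - x⟫ = -((1 / M) * ⟪f' x, d⟫) := by
    rw [hzx, inner_neg_right, real_inner_smul_right]
  have e3 : ‖z - x‖ ^ 2 = (1 / M) ^ 2 * ‖d‖ ^ 2 := by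
    rw [hzx, norm_neg, norm_smul, mul_pow]
    congr 1
    rw [Real.norm_eq_abs, abs_of_pos (by positivity)]
  have e4 : ⟪f' x, d⟫ - ⟪f' y, d⟫ = ‖d‖ ^ 2 := by
    rw [← inner_sub_left, ← hd, real_inner_self_eq_norm_sq]
  rw [e1] at hC
  rw [e2, e3] at hB
  have hM' : M ≠ 0 := ne_of_gt hM
  have key : f y + ⟪f' y, x - y⟫ + (1 / M) * (⟪f' x, d⟫ - ⟪f' y, d⟫)
      - M / 2 * ((1 / M) ^ 2 * ‖d‖ ^ 2) ≤ f x := by linarith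
  rw [e4] at key
  have : (1 / M) * ‖d‖ ^ 2 - M / 2 * ((1 / M) ^ 2 * ‖d‖ ^ 2) = 1 / (2 * M) * ‖d‖ ^ 2 := by
    field_simp
    ring
  linarith [key, this.symm.le]

/-- Baillon–Haddad: cocoercivity of the gradient. -/
lemma aux_bh (f : E → ℝ) (f' : E → E) (hconv : ConvexOn ℝ Set.univ f)
    (hgrad : ∀ x, HasGradientAt f (f' x) x)
    (M : ℝ) (hM : 0 < M) (hlip : ∀ x y, ‖f' x - f' y‖ ≤ M * ‖x - y‖) (x y : E) :
    1 / M * ‖f' x - f' y‖ ^ 2 ≤ ⟪f' x - f' y, x - y⟫ := by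
  have h1 := aux_bh_one f f' hconv hgrad M hM hlip x y
  have h2 := aux_bh_one f f' hconv hgrad M hM hlip y x
  have hnorm : ‖f' y - f' x‖ = ‖f' x - f' y‖ := norm_sub_rev _ _
  rw [hnorm] at h2
  have e : ⟪f' x - f' y, x - y⟫ = - ⟪f' y, x - y⟫ - ⟪f' x, y - x⟫ := by
    rw [inner_sub_left]
    have : ⟪f' x, y - x⟫ = - ⟪f' x, x - y⟫ := by
      rw [← inner_neg_right]; congr 1; abel
    rw [this]; ring
  rw [e]
  have : 1 / (2 * M) * ‖f' x - f' y‖ ^ 2 + 1 / (2 * M) * ‖f' x - f' y‖ ^ 2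
      = 1 / M * ‖f' x - f' y‖ ^ 2 := by
    field_simp; ring
  linarith

end Aux

/-- The gradient step of a convex strongly smooth function is (λM/2)-averaged. -/
theorem gradient_step_is_averaged
    {E : Type*} [NormedAddCommGroup E] [InnerProductSpace ℝ E] [CompleteSpace E]
    (f : E → ℝ) (f' : E → E)
    (hconv : ConvexOn ℝ Set.univ f)
    (hgrad : ∀ x, HasGradientAt f (f' x) x)
    (M : ℝ) (hM : 0 < M)
    (hlip : ∀ x y, ‖f' x - f' y‖ ≤ M * ‖x - y‖)
    (lam : ℝ) (hlam : lam ∈ Set.Ioo 0 (2 / M)) :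
    (∀ x y : E, ‖(x - (2 / M) • f' x) - (y - (2 / M) • f' y)‖ ≤ ‖x - y‖) ∧
    (∀ x : E, x - lam • f' x
        = (1 - lam * M / 2) • x + (lam * M / 2) • (x - (2 / M) • f' x)) := by
  have hM' : M ≠ 0 := ne_of_gt hM
  constructor
  · intro x y
    have hbh := aux_bh f f' hconv hgrad M hM hlip x y
    set d := f' x - f' y with hd
    have hrw : (x - (2 / M) • f' x) - (y - (2 / M) • f' y) = (x - y) - (2 / M) • d := by
      rw [hd, smul_sub]; abel
    have hsq : ‖(x - y) - (2 / M) • d‖ ^ 2 ≤ ‖x - y‖ ^ 2 := by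
      rw [norm_sub_sq_real, real_inner_smul_right, norm_smul, mul_pow,
        Real.norm_eq_abs, abs_of_pos (by positivity : (0:ℝ) < 2 / M)]
      have hinner : ⟪x - y, d⟫ = ⟪d, x - y⟫ := real_inner_comm _ _
      rw [hinner]
      have hpos : (0:ℝ) < 2 / M := by positivity
      have h4 : (2 / M) ^ 2 * ‖d‖ ^ 2 ≤ 2 * (2 / M * ⟪d, x - y⟫) := by
        have h5 : (2 / M) ^ 2 * ‖d‖ ^ 2 = 2 * (2 / M) * (1 / M * ‖d‖ ^ 2) := by
          field_simp
        rw [h5]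
        have := mul_le_mul_of_nonneg_left hbh (by positivity : (0:ℝ) ≤ 2 * (2 / M))
        linarith
      linarith
    rw [hrw]
    have h1 : ‖(x - y) - (2 / M) • d‖ = Real.sqrt (‖(x - y) - (2 / M) • d‖ ^ 2) := by
      rw [Real.sqrt_sq (norm_nonneg _)]
    have h2 : ‖x - y‖ = Real.sqrt (‖x - y‖ ^ 2) := by
      rw [Real.sqrt_sq (norm_nonneg _)]
    rw [h1, h2]
    exact Real.sqrt_le_sqrt hsq
  · intro x
    have hc : (lam * M / 2) * (2 / M) = lam := by field_simp
    rw [smul_sub, smul_smul, hc, sub_smul, one_smul]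
    abel
end

section
/- [Running projected gradient, residual convergence] Let M > 0 and λ ∈ (0, 2/M). For k = 1, 2, … let f_k : E → ℝ be convex and differentiable with gradient ∇f_k Lipschitz with constant M_k where 0 < M_k ≤ M; let K_k ⊆ E be nonempty closed convex sets with ‖y‖ ≤ X for every y ∈ K_k and every k, and let Π_k denote the metric projection onto K_k. Suppose x*_k are points with Π_k(x*_k − λ·∇f_k(x*_k)) = x*_k and ‖x*_{k+1} − x*_k‖ ≤ δ for all k. Define the running projected gradient iteration x_{k+1} = Π_k(x_k − λ·∇f_k(x_k)) from x₁ ∈ E and set a = 1 − λM/2 > 0. Then for every N ≥ 1: (1/N)·Σ_{k=1}^{N} ‖Π_k(x_k − λ·∇f_k(x_k)) − x_k‖² ≤ (1/(a·N))·‖x₁ − x*₁‖² + (δ/a)·(4X + δ). -/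
open RealInnerProductSpace

section Aux

variable {E : Type*} [NormedAddCommGroup E] [InnerProductSpace ℝ E] [CompleteSpace E]

private lemma line_hasDerivAt (f : E → ℝ) (f' : E → E)
    (hgrad : ∀ z, HasGradientAt f (f' z) z) (x v : E) (t : ℝ) :
    HasDerivAt (fun s : ℝ => f (x + s • v)) ⟪f' (x + t • v), v⟫ t := by
  have h1 : HasDerivAt (fun s : ℝ => x + s • v) v t := by
    simpa using ((hasDerivAt_id t).smul_const v).const_add x
  have h2 := (hgrad (x + t • v)).hasFDerivAt
  have h3 := h2.comp_hasDerivAt t h1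
  simpa [InnerProductSpace.toDual_apply_apply, Function.comp_def] using h3

/-- First-order condition for convex differentiable functions. -/
private lemma convex_grad_ineq (f : E → ℝ) (f' : E → E)
    (hconv : ConvexOn ℝ Set.univ f) (hgrad : ∀ z, HasGradientAt f (f' z) z) (x y : E) :
    f x + ⟪f' x, y - x⟫ ≤ f y := by
  set g : ℝ → ℝ := fun s => f (x + s • (y - x)) with hg
  have hgc : ConvexOn ℝ Set.univ g := by
    have := hconv.comp_affineMap (AffineMap.lineMap x y)
    have hpre : (AffineMap.lineMap x y : ℝ →ᵃ[ℝ] E) ⁻¹' Set.univ = Set.univ := by simp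
    rw [hpre] at this
    refine (show g = f ∘ AffineMap.lineMap x y from ?_) ▸ this
    funext s
    simp [hg, Function.comp, AffineMap.lineMap_apply, add_comm]
  have hd : HasDerivAt g ⟪f' x, y - x⟫ 0 := by
    simpa using line_hasDerivAt f f' hgrad x (y - x) 0
  have hs := hgc.le_slope_of_hasDerivAt (Set.mem_univ (0:ℝ)) (Set.mem_univ (1:ℝ))
    one_pos hd
  rw [slope_def_field] at hs
  have hg0 : g 0 = f x := by simp [hg]
  have hg1 : g 1 = f y := by simp [hg]
  rw [hg0, hg1] at hs
  simp at hs
  linarith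

/-- Descent lemma for functions with Lipschitz gradient. -/
private lemma descent_lemma (f : E → ℝ) (f' : E → E) (L : ℝ) (hL : 0 < L)
    (hgrad : ∀ z, HasGradientAt f (f' z) z)
    (hlip : ∀ x y, ‖f' x - f' y‖ ≤ L * ‖x - y‖) (x y : E) :
    f y ≤ f x + ⟪f' x, y - x⟫ + L / 2 * ‖y - x‖ ^ 2 := by
  set v := y - x with hv
  set h : ℝ → ℝ := fun t => f (x + t • v) - t * ⟪f' x, v⟫ - L / 2 * t ^ 2 * ‖v‖ ^ 2 with hh
  have hderiv : ∀ t : ℝ, HasDerivAt h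
      (⟪f' (x + t • v), v⟫ - ⟪f' x, v⟫ - L / 2 * (2 * t) * ‖v‖ ^ 2) t := by
    intro t
    have h1 := line_hasDerivAt f f' hgrad x v t
    have h2 : HasDerivAt (fun t : ℝ => t * ⟪f' x, v⟫) ⟪f' x, v⟫ t := by
      simpa using (hasDerivAt_id t).mul_const ⟪f' x, v⟫
    have h3 : HasDerivAt (fun t : ℝ => L / 2 * t ^ 2 * ‖v‖ ^ 2)
        (L / 2 * (2 * t) * ‖v‖ ^ 2) t := by
      have h4 := ((hasDerivAt_pow 2 t).const_mul (L / 2)).mul_const (‖v‖ ^ 2)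
      exact h4.congr_deriv (by norm_num)
    exact (h1.sub h2).sub h3
  have hanti : AntitoneOn h (Set.Icc 0 1) := by
    apply antitoneOn_of_hasDerivWithinAt_nonpos (convex_Icc 0 1)
      (fun t _ => (hderiv t).continuousAt.continuousWithinAt)
      (f' := fun t => ⟪f' (x + t • v), v⟫ - ⟪f' x, v⟫ - L / 2 * (2 * t) * ‖v‖ ^ 2)
      (fun t _ => (hderiv t).hasDerivWithinAt)
    intro t ht
    rw [interior_Icc] at ht
    have ht0 : 0 < t := ht.1
    have hcs : ⟪f' (x + t • v) - f' x, v⟫ ≤ ‖f' (x + t • v) - f' x‖ * ‖v‖ :=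
      real_inner_le_norm _ _
    have hlipt : ‖f' (x + t • v) - f' x‖ ≤ L * (t * ‖v‖) := by
      have h9 := hlip (x + t • v) x
      simpa [norm_smul, abs_of_pos ht0] using h9
    have h5 : ⟪f' (x + t • v), v⟫ - ⟪f' x, v⟫ ≤ L * t * ‖v‖ ^ 2 := by
      rw [← inner_sub_left]
      calc ⟪f' (x + t • v) - f' x, v⟫ ≤ ‖f' (x + t • v) - f' x‖ * ‖v‖ := hcs
        _ ≤ L * (t * ‖v‖) * ‖v‖ := mul_le_mul_of_nonneg_right hlipt (norm_nonneg _)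
        _ = L * t * ‖v‖ ^ 2 := by ring
    nlinarith
  have h6 := hanti (Set.left_mem_Icc.2 zero_le_one) (Set.right_mem_Icc.2 zero_le_one)
    zero_le_one
  simp only [hh, one_smul, zero_smul, one_pow, mul_one, one_mul, zero_mul, sub_zero,
    add_zero] at h6
  have hxv : x + v = y := by rw [hv]; abel
  rw [hxv] at h6
  linarith

/-- Cocoercivity (Baillon–Haddad). -/
private lemma cocoercive (f : E → ℝ) (f' : E → E) (L : ℝ) (hL : 0 < L)
    (hconv : ConvexOn ℝ Set.univ f) (hgrad : ∀ z, HasGradientAt f (f' z) z)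
    (hlip : ∀ x y, ‖f' x - f' y‖ ≤ L * ‖x - y‖) (x y : E) :
    ‖f' x - f' y‖ ^ 2 ≤ L * ⟪f' x - f' y, x - y⟫ := by
  have key : ∀ p q : E,
      f p - ⟪f' p, p⟫ + ‖f' q - f' p‖ ^ 2 / (2 * L) ≤ f q - ⟪f' p, q⟫ := by
    intro p q
    set c := f' p with hc
    set φ : E → ℝ := fun z => f z - ⟪c, z⟫ with hφ
    set φ' : E → E := fun z => f' z - c with hφ'
    have hφgrad : ∀ z, HasGradientAt φ (φ' z) z := by
      intro z
      have h1 : HasFDerivAt φ (InnerProductSpace.toDual ℝ E (f' z)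
          - InnerProductSpace.toDual ℝ E c) z := by
        have hf1 := (hgrad z).hasFDerivAt
        have hf2 : HasFDerivAt (fun w : E => ⟪c, w⟫)
            (InnerProductSpace.toDual ℝ E c) z :=
          (InnerProductSpace.toDual ℝ E c).hasFDerivAt
        exact hf1.sub hf2
      have h2 : InnerProductSpace.toDual ℝ E (f' z) - InnerProductSpace.toDual ℝ E c
          = InnerProductSpace.toDual ℝ E (f' z - c) := (map_sub _ _ _).symm
      rw [h2] at h1
      simpa using h1.hasGradientAt
    have hφlip : ∀ u w, ‖φ' u - φ' w‖ ≤ L * ‖u - w‖ := by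
      intro u w
      simpa [hφ', sub_sub_sub_cancel_right] using hlip u w
    set w := q - (1 / L) • φ' q with hw
    have hdesc := descent_lemma φ φ' L hL hφgrad hφlip q w
    have hwq : w - q = -((1 / L) • φ' q) := by rw [hw]; abel
    have h6 : ⟪φ' q, w - q⟫ = -(1 / L) * ‖φ' q‖ ^ 2 := by
      rw [hwq, inner_neg_right, real_inner_smul_right, real_inner_self_eq_norm_sq]
      ring
    have h7 : ‖w - q‖ ^ 2 = (1 / L) ^ 2 * ‖φ' q‖ ^ 2 := by
      rw [hwq, norm_neg, norm_smul, Real.norm_eq_abs, mul_pow, sq_abs]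
    rw [h6, h7] at hdesc
    have hmin : φ p ≤ φ w := by
      have h8 := convex_grad_ineq f f' hconv hgrad p w
      have h9 : ⟪c, w - p⟫ = ⟪c, w⟫ - ⟪c, p⟫ := inner_sub_right _ _ _
      simp only [hφ]
      rw [hc] at h9
      linarith [h8, h9.le, h9.ge]
    have hφq : φ' q = f' q - f' p := by rw [hφ', hc]
    have h12 : φ w ≤ φ q - ‖φ' q‖ ^ 2 / (2 * L) := by
      have hL0 : L ≠ 0 := hL.ne'
      have heq : -(1 / L) * ‖φ' q‖ ^ 2 + L / 2 * ((1 / L) ^ 2 * ‖φ' q‖ ^ 2)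
          = -(‖φ' q‖ ^ 2 / (2 * L)) := by field_simp; ring
      linarith [hdesc, heq.le, heq.ge]
    have h11 : φ p ≤ φ q - ‖f' q - f' p‖ ^ 2 / (2 * L) := by
      rw [hφq] at h12
      exact le_trans hmin h12
    simp only [hφ] at h11
    rw [hc] at h11
    linarith
  have k1 := key x y
  have k2 := key y x
  have hn : ‖f' y - f' x‖ = ‖f' x - f' y‖ := norm_sub_rev _ _
  rw [hn] at k1
  have e1 : ⟪f' x, x⟫ - ⟪f' x, y⟫ = ⟪f' x, x - y⟫ := (inner_sub_right _ _ _).symm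
  have e2 : ⟪f' y, x⟫ - ⟪f' y, y⟫ = ⟪f' y, x - y⟫ := (inner_sub_right _ _ _).symm
  have e3 : ⟪f' x, x - y⟫ - ⟪f' y, x - y⟫ = ⟪f' x - f' y, x - y⟫ :=
    (inner_sub_left _ _ _).symm
  have hL2 : (0:ℝ) < 2 * L := by positivity
  have h10 : 2 * (‖f' x - f' y‖ ^ 2 / (2 * L)) ≤ ⟪f' x - f' y, x - y⟫ := by linarith
  have h13 : ‖f' x - f' y‖ ^ 2 = L * (2 * (‖f' x - f' y‖ ^ 2 / (2 * L))) := by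
    field_simp
  rw [h13]
  exact mul_le_mul_of_nonneg_left h10 hL.le

/-- Variational inequality for the metric projection. -/
private lemma proj_vi {K : Set E} (hc : Convex ℝ K) {p u : E}
    (hpK : p ∈ K) (hmin : ∀ y ∈ K, ‖u - p‖ ≤ ‖u - y‖) :
    ∀ y ∈ K, ⟪u - p, y - p⟫ ≤ 0 := by
  haveI : Nonempty ↥K := ⟨⟨p, hpK⟩⟩
  apply (norm_eq_iInf_iff_real_inner_le_zero hc hpK).1
  apply le_antisymm
  · exact le_ciInf fun w => hmin w w.2
  · have hbdd : BddBelow (Set.range fun w : ↥K => ‖u - (w : E)‖) := by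
      refine ⟨0, ?_⟩
      rintro s ⟨w, rfl⟩
      exact norm_nonneg _
    exact ciInf_le hbdd ⟨p, hpK⟩

private lemma firm_aux {u ust p pst : E}
    (h1 : ⟪u - p, pst - p⟫ ≤ 0) (h2 : ⟪ust - pst, p - pst⟫ ≤ 0) :
    ‖p - pst‖ ^ 2 ≤ ⟪u - ust, p - pst⟫ := by
  have e : ⟪u - ust, p - pst⟫ - ‖p - pst‖ ^ 2
      = -⟪u - p, pst - p⟫ - ⟪ust - pst, p - pst⟫ := by
    rw [← real_inner_self_eq_norm_sq]
    simp only [inner_sub_left, inner_sub_right]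
    ring
  linarith

/-- Key one-step inequality for the projected gradient operator. -/
private lemma key_step (M lam : ℝ) (hM : 0 < M) (hl0 : 0 < lam)
    (hl2 : lam * M < 2)
    (f : E → ℝ) (f' : E → E) (L : ℝ) (hL : 0 < L) (hLM : L ≤ M)
    (hconv : ConvexOn ℝ Set.univ f) (hgrad : ∀ z, HasGradientAt f (f' z) z)
    (hlip : ∀ u w, ‖f' u - f' w‖ ≤ L * ‖u - w‖)
    (K : Set E) (hc : Convex ℝ K)
    (P : E → E) (hP : ∀ z, P z ∈ K ∧ ∀ y ∈ K, ‖z - P z‖ ≤ ‖z - y‖)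
    (xst : E) (hfix : P (xst - lam • f' xst) = xst) (x : E) :
    ‖P (x - lam • f' x) - xst‖ ^ 2
      ≤ ‖x - xst‖ ^ 2 - (1 - lam * M / 2) * ‖P (x - lam • f' x) - x‖ ^ 2 := by
  set g := f' x - f' xst with hgdef
  set d := x - xst with hddef
  set u := x - lam • f' x with hudef
  set ust := xst - lam • f' xst with hustdef
  set p := P u with hpdef
  set B := p - xst with hBdef
  set A := u - ust with hAdef
  have hl2' : 0 < 2 - lam * M := by linarith
  have hlM : 0 < lam * M := mul_pos hl0 hM
  -- cocoercivity, weakened to constant M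
  have hco : ‖g‖ ^ 2 ≤ M * ⟪g, d⟫ := by
    have h1 := cocoercive f f' L hL hconv hgrad hlip x xst
    rw [← hgdef, ← hddef] at h1
    have hgd : 0 ≤ ⟪g, d⟫ := by nlinarith [sq_nonneg ‖g‖]
    calc ‖g‖ ^ 2 ≤ L * ⟪g, d⟫ := h1
      _ ≤ M * ⟪g, d⟫ := mul_le_mul_of_nonneg_right hLM hgd
  -- firm nonexpansiveness : ‖B‖² ≤ ⟪A, B⟫
  have hfirm : ‖B‖ ^ 2 ≤ ⟪A, B⟫ := by
    have hv1 := proj_vi hc (hP u).1 (hP u).2 xst (hfix ▸ (hP ust).1)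
    have hv2' := proj_vi hc (hP ust).1 (hP ust).2 p (hP u).1
    rw [hfix] at hv2'
    rw [hAdef, hBdef]
    exact firm_aux hv1 hv2'
  -- expansions
  have hAeq : A = d - lam • g := by
    rw [hAdef, hudef, hustdef, hddef, hgdef, smul_sub]; abel
  have haa : ‖A‖ ^ 2 = ‖d‖ ^ 2 - 2 * lam * ⟪g, d⟫ + lam ^ 2 * ‖g‖ ^ 2 := by
    rw [hAeq, norm_sub_sq_real, real_inner_smul_right, norm_smul, Real.norm_eq_abs, mul_pow, sq_abs,
      real_inner_comm d g]
    ring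
  have hAd : A - d = -(lam • g) := by rw [hAeq]; abel
  have hAdsq : ‖A - d‖ ^ 2 = lam ^ 2 * ‖g‖ ^ 2 := by
    rw [hAd, norm_neg, norm_smul, Real.norm_eq_abs, mul_pow, sq_abs]
  -- Young-type square
  have fact3 : (0:ℝ) ≤ (lam * M) ^ 2 * ‖A - B‖ ^ 2
      - 2 * (lam * M * (2 - lam * M)) * ⟪B - A, A - d⟫
      + (2 - lam * M) ^ 2 * (lam ^ 2 * ‖g‖ ^ 2) := by
    have h := sq_nonneg ‖(lam * M) • (B - A) - (2 - lam * M) • (A - d)‖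
    rw [norm_sub_sq_real, real_inner_smul_left, real_inner_smul_right, norm_smul,
      norm_smul, Real.norm_eq_abs, Real.norm_eq_abs, mul_pow, mul_pow, sq_abs, sq_abs,
      norm_sub_rev B A] at h
    rw [← hAdsq]
    nlinarith [h]
  -- step 2: ‖B‖² ≤ ‖A‖² - ‖A - B‖²
  have hstep2 : ‖B‖ ^ 2 ≤ ‖A‖ ^ 2 - ‖A - B‖ ^ 2 := by
    have h := norm_sub_sq_real A B
    linarith
  have fact1 : ‖B‖ ^ 2 ≤ ‖d‖ ^ 2 - 2 * lam * ⟪g, d⟫ + lam ^ 2 * ‖g‖ ^ 2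
      - ‖A - B‖ ^ 2 := by rw [← haa]; exact hstep2
  -- residual expansion : ‖p - x‖² = ‖A-B‖² + 2⟪B-A, A-d⟫ + lam²‖g‖²
  have hpx : p - x = B - d := by rw [hBdef, hddef]; abel
  have hBd2 : ‖p - x‖ ^ 2 = ‖A - B‖ ^ 2 + 2 * ⟪B - A, A - d⟫ + lam ^ 2 * ‖g‖ ^ 2 := by
    rw [hpx, show B - d = (B - A) + (A - d) from by abel, norm_add_sq_real,
      norm_sub_rev B A, hAdsq]
  -- scaled combination
  have key1 := mul_le_mul_of_nonneg_left fact1 hlM.le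
  have key2 := mul_le_mul_of_nonneg_left hco (by positivity : (0:ℝ) ≤ 2 * lam ^ 2)
  have goal_scaled : lam * M * ‖B‖ ^ 2
      ≤ lam * M * (‖d‖ ^ 2 - (1 - lam * M / 2) * ‖p - x‖ ^ 2) := by
    rw [hBd2]
    linarith [key1, key2, fact3]
  have hfin := (mul_le_mul_iff_right₀ hlM).1 goal_scaled
  calc ‖P (x - lam • f' x) - xst‖ ^ 2 = ‖B‖ ^ 2 := by rw [hBdef, hpdef, hudef]
    _ ≤ ‖d‖ ^ 2 - (1 - lam * M / 2) * ‖p - x‖ ^ 2 := hfin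
    _ = ‖x - xst‖ ^ 2 - (1 - lam * M / 2) * ‖P (x - lam • f' x) - x‖ ^ 2 := by
        rw [hddef, hpdef, hudef]

end Aux

/-- Running projected gradient: mean fixed-point residual convergence. -/
theorem running_projected_gradient_residual
    {E : Type*} [NormedAddCommGroup E] [InnerProductSpace ℝ E] [CompleteSpace E]
    (M X δ lam : ℝ) (hM : 0 < M) (hlam : lam ∈ Set.Ioo 0 (2 / M))
    (f : ℕ → E → ℝ) (f' : ℕ → E → E) (Mk : ℕ → ℝ)
    (hconv : ∀ k, ConvexOn ℝ Set.univ (f k))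
    (hgrad : ∀ k x, HasGradientAt (f k) (f' k x) x)
    (hMk : ∀ k, 0 < Mk k ∧ Mk k ≤ M)
    (hlip : ∀ k x y, ‖f' k x - f' k y‖ ≤ Mk k * ‖x - y‖)
    (K : ℕ → Set E)
    (hK : ∀ k, (K k).Nonempty ∧ IsClosed (K k) ∧ Convex ℝ (K k))
    (hKX : ∀ k, ∀ y ∈ K k, ‖y‖ ≤ X)
    (P : ℕ → E → E)
    (hP : ∀ k x, P k x ∈ K k ∧ ∀ y ∈ K k, ‖x - P k x‖ ≤ ‖x - y‖)
    (xs : ℕ → E) (hfix : ∀ k, P k (xs k - lam • f' k (xs k)) = xs k)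
    (hdrift : ∀ k, ‖xs (k + 1) - xs k‖ ≤ δ)
    (x : ℕ → E) (hx : ∀ k ≥ 1, x (k + 1) = P k (x k - lam • f' k (x k)))
    (a : ℝ) (ha : a = 1 - lam * M / 2)
    (N : ℕ) (hN : 1 ≤ N) :
    (1 / (N : ℝ)) * ∑ k ∈ Finset.Icc 1 N, ‖P k (x k - lam • f' k (x k)) - x k‖ ^ 2
      ≤ (1 / (a * N)) * ‖x 1 - xs 1‖ ^ 2 + (δ / a) * (4 * X + δ) := by
  obtain ⟨hl0, hl2'⟩ := hlam
  have hl2 : lam * M < 2 := by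
    have := (lt_div_iff₀ hM).1 hl2'
    linarith
  have ha0 : 0 < a := by rw [ha]; linarith
  have hδ0 : 0 ≤ δ := le_trans (norm_nonneg _) (hdrift 0)
  have hX0 : 0 ≤ X := by
    obtain ⟨y, hy⟩ := (hK 0).1
    exact le_trans (norm_nonneg y) (hKX 0 y hy)
  set r : ℕ → ℝ := fun k => ‖P k (x k - lam • f' k (x k)) - x k‖ ^ 2 with hr
  set e : ℕ → ℝ := fun k => ‖x k - xs k‖ ^ 2 with he
  -- per-step inequality
  have hstep : ∀ k, 1 ≤ k → a * r k ≤ e k - e (k + 1) + δ * (4 * X + δ) := by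
    intro k hk
    have hkey := key_step M lam hM hl0 hl2 (f k) (f' k) (Mk k) (hMk k).1 (hMk k).2
      (hconv k) (hgrad k) (hlip k) (K k) (hK k).2.2 (P k) (hP k) (xs k) (hfix k) (x k)
    have hyx : x (k + 1) = P k (x k - lam • f' k (x k)) := hx k hk
    have hmem1 : P k (x k - lam • f' k (x k)) ∈ K k := (hP k _).1
    have hmem2 : xs k ∈ K k := (hfix k) ▸ (hP k _).1
    have hb : ‖P k (x k - lam • f' k (x k)) - xs k‖ ≤ 2 * X := by
      calc ‖P k (x k - lam • f' k (x k)) - xs k‖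
          ≤ ‖P k (x k - lam • f' k (x k))‖ + ‖xs k‖ := norm_sub_le _ _
        _ ≤ X + X := add_le_add (hKX k _ hmem1) (hKX k _ hmem2)
        _ = 2 * X := by ring
    have hdr : ‖P k (x k - lam • f' k (x k)) - xs (k + 1)‖
        ≤ ‖P k (x k - lam • f' k (x k)) - xs k‖ + δ := by
      calc ‖P k (x k - lam • f' k (x k)) - xs (k + 1)‖
          = ‖(P k (x k - lam • f' k (x k)) - xs k) + (xs k - xs (k + 1))‖ := by
            congr 1; abel
        _ ≤ ‖P k (x k - lam • f' k (x k)) - xs k‖ + ‖xs k - xs (k + 1)‖ :=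
            norm_add_le _ _
        _ ≤ ‖P k (x k - lam • f' k (x k)) - xs k‖ + δ := by
            linarith [norm_sub_rev (xs (k + 1)) (xs k), hdrift k]
    have he1 : ‖P k (x k - lam • f' k (x k)) - xs (k + 1)‖ ^ 2
        ≤ ‖P k (x k - lam • f' k (x k)) - xs k‖ ^ 2 + δ * (4 * X + δ) := by
      nlinarith [hdr, hb, norm_nonneg (P k (x k - lam • f' k (x k)) - xs (k + 1)),
        norm_nonneg (P k (x k - lam • f' k (x k)) - xs k)]
    simp only [he, hr]
    rw [hyx, ha]
    nlinarith [hkey, he1]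
  -- telescoping sum
  have hsum : ∀ n : ℕ, 1 ≤ n →
      a * ∑ k ∈ Finset.Icc 1 n, r k ≤ e 1 - e (n + 1) + n * (δ * (4 * X + δ)) := by
    intro n hn
    induction n with
    | zero => omega
    | succ m ih =>
      rcases Nat.eq_or_lt_of_le hn with h1 | h1
      · simp only [← h1]
        norm_num
        have := hstep 1 le_rfl
        linarith
      · have hm : 1 ≤ m := by omega
        have ihm := ih hm
        rw [Finset.sum_Icc_succ_top (by omega : 1 ≤ m + 1)]
        have hsm := hstep (m + 1) (by omega)
        push_cast
        nlinarith [ihm, hsm]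
  have hS := hsum N hN
  have heN : 0 ≤ e (N + 1) := by positivity
  have hSN : a * ∑ k ∈ Finset.Icc 1 N, r k ≤ e 1 + N * (δ * (4 * X + δ)) := by
    linarith
  have hNpos : (0:ℝ) < N := by exact_mod_cast Nat.lt_of_lt_of_le Nat.zero_lt_one hN
  have hrw : (1 / (a * N)) * ‖x 1 - xs 1‖ ^ 2 + (δ / a) * (4 * X + δ)
      = (1 / (a * N)) * (e 1 + N * (δ * (4 * X + δ))) := by
    simp only [he]
    field_simp
  rw [hrw]
  have hlhs : (1 / (N : ℝ)) * ∑ k ∈ Finset.Icc 1 N, r k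
      = (1 / (a * N)) * (a * ∑ k ∈ Finset.Icc 1 N, r k) := by
    field_simp
  calc (1 / (N : ℝ)) * ∑ k ∈ Finset.Icc 1 N, ‖P k (x k - lam • f' k (x k)) - x k‖ ^ 2
      = (1 / (a * N)) * (a * ∑ k ∈ Finset.Icc 1 N, r k) := hlhs
    _ ≤ (1 / (a * N)) * (e 1 + N * (δ * (4 * X + δ))) := by
        apply mul_le_mul_of_nonneg_left hSN (by positivity)
end

section
/- [Running proximal point, residual convergence] Let λ > 0. For k = 1, 2, … let f_k : E → ℝ be convex, and let K_k ⊆ E be nonempty compact convex sets with ‖y‖ ≤ X for every y ∈ K_k and every k. Suppose x*_k ∈ K_k minimizes y ↦ f_k(y) + (1/(2λ))‖y − x*_k‖² over K_k (i.e. x*_k is a fixed point of the proximal map) and ‖x*_{k+1} − x*_k‖ ≤ δ for all k. Define the running proximal point iteration: x_{k+1} ∈ K_k is a minimizer over K_k of y ↦ f_k(y) + (1/(2λ))‖y − x_k‖², starting from x₁ ∈ E. Then for every N ≥ 1: (1/N)·Σ_{k=1}^{N} ‖x_{k+1} − x_k‖² ≤ (1/N)·‖x₁ − x*₁‖² + δ·(4X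 + δ). -/
open RealInnerProductSpace

lemma strong_min_aux {E : Type*} [NormedAddCommGroup E] [InnerProductSpace ℝ E]
    (c : ℝ) (hc : 0 < c) (f : E → ℝ) (hf : ConvexOn ℝ Set.univ f)
    {K : Set E} (hKc : Convex ℝ K) (x p : E) (hp : p ∈ K)
    (hmin : ∀ y ∈ K, f p + c * ‖p - x‖ ^ 2 ≤ f y + c * ‖y - x‖ ^ 2) :
    ∀ y ∈ K, f p + c * ‖p - x‖ ^ 2 + c * ‖y - p‖ ^ 2 ≤ f y + c * ‖y - x‖ ^ 2 := by
  intro y hy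
  have key : ∀ t : ℝ, 0 < t → t < 1 →
      f p + c * ‖p - x‖ ^ 2 + c * (1 - t) * ‖y - p‖ ^ 2 ≤ f y + c * ‖y - x‖ ^ 2 := by
    intro t ht0 ht1
    set z := (1 - t) • p + t • y with hz
    have hzK : z ∈ K := hKc hp hy (by linarith) ht0.le (by ring)
    have h1 := hmin z hzK
    have hfz : f z ≤ (1 - t) * f p + t * f y :=
      hf.2 (Set.mem_univ p) (Set.mem_univ y) (by linarith) ht0.le (by ring)
    have hzx : z - x = (1 - t) • (p - x) + t • (y - x) := by
      rw [hz, smul_sub, smul_sub]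
      module
    have hnorm : ‖z - x‖ ^ 2 = (1 - t) * ‖p - x‖ ^ 2 + t * ‖y - x‖ ^ 2
        - t * (1 - t) * ‖y - p‖ ^ 2 := by
      have hyp : y - p = (y - x) - (p - x) := by abel
      rw [hzx, hyp]
      rw [← real_inner_self_eq_norm_sq, ← real_inner_self_eq_norm_sq,
        ← real_inner_self_eq_norm_sq, ← real_inner_self_eq_norm_sq]
      simp only [inner_add_left, inner_add_right, inner_sub_left, inner_sub_right,
        real_inner_smul_left, real_inner_smul_right]
      rw [real_inner_comm x p, real_inner_comm x y, real_inner_comm p y]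
      ring
    nlinarith [mul_pos ht0 (sub_pos.mpr ht1), sq_nonneg ‖y - p‖, hc.le,
      mul_le_mul_of_nonneg_left hfz (le_of_lt (show (0:ℝ) < 1 by norm_num))]
  have hD : 0 ≤ c * ‖y - p‖ ^ 2 := by positivity
  set D := c * ‖y - p‖ ^ 2 with hDdef
  have : ∀ ε > (0:ℝ), f p + c * ‖p - x‖ ^ 2 + D ≤ f y + c * ‖y - x‖ ^ 2 + ε := by
    intro ε hε
    set t := ε / (D + 2 * ε) with htdef
    have hden : (0:ℝ) < D + 2 * ε := by linarith
    have ht0 : 0 < t := div_pos hε hden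
    have ht1 : t < 1 := by rw [htdef, div_lt_one hden]; linarith
    have hk := key t ht0 ht1
    have htD : t * D ≤ ε := by
      rw [htdef, div_mul_eq_mul_div, div_le_iff₀ hden]
      nlinarith
    nlinarith
  linarith [le_of_forall_pos_le_add this]

/-- Running proximal point: mean fixed-point residual convergence. -/
theorem running_proximal_point_residual
    {E : Type*} [NormedAddCommGroup E] [InnerProductSpace ℝ E] [CompleteSpace E]
    (lam X δ : ℝ) (hlam : 0 < lam)
    (f : ℕ → E → ℝ) (hconv : ∀ k, ConvexOn ℝ Set.univ (f k))
    (K : ℕ → Set E)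
    (hK : ∀ k, (K k).Nonempty ∧ IsCompact (K k) ∧ Convex ℝ (K k))
    (hKX : ∀ k, ∀ y ∈ K k, ‖y‖ ≤ X)
    (xs : ℕ → E)
    (hfix : ∀ k, xs k ∈ K k ∧
      ∀ y ∈ K k, f k (xs k) ≤ f k y + 1 / (2 * lam) * ‖y - xs k‖ ^ 2)
    (hdrift : ∀ k, ‖xs (k + 1) - xs k‖ ≤ δ)
    (x : ℕ → E)
    (hx : ∀ k ≥ 1, x (k + 1) ∈ K k ∧
      ∀ y ∈ K k, f k (x (k + 1)) + 1 / (2 * lam) * ‖x (k + 1) - x k‖ ^ 2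
        ≤ f k y + 1 / (2 * lam) * ‖y - x k‖ ^ 2)
    (N : ℕ) (hN : 1 ≤ N) :
    (1 / (N : ℝ)) * ∑ k ∈ Finset.Icc 1 N, ‖x (k + 1) - x k‖ ^ 2
      ≤ (1 / (N : ℝ)) * ‖x 1 - xs 1‖ ^ 2 + δ * (4 * X + δ) := by
  have hc : (0:ℝ) < 1 / (2 * lam) := by positivity
  set c : ℝ := 1 / (2 * lam) with hcdef
  have hdel : 0 ≤ δ := le_trans (norm_nonneg _) (hdrift 0)
  have step : ∀ k, 1 ≤ k → ‖x (k+1) - x k‖ ^ 2 + ‖x (k+1) - xs (k+1)‖ ^ 2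
      ≤ ‖x k - xs k‖ ^ 2 + δ * (4 * X + δ) := by
    intro k hk
    obtain ⟨hpK, hpmin⟩ := hx k hk
    obtain ⟨hsK, hsmin⟩ := hfix k
    have h1 := strong_min_aux c hc (f k) (hconv k) (hK k).2.2 (x k) (x (k+1)) hpK
      hpmin (xs k) hsK
    have hsmin' : ∀ y ∈ K k, f k (xs k) + c * ‖xs k - xs k‖ ^ 2
        ≤ f k y + c * ‖y - xs k‖ ^ 2 := by
      intro y hy; simpa using hsmin y hy
    have h2 := strong_min_aux c hc (f k) (hconv k) (hK k).2.2 (xs k) (xs k) hsK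
      hsmin' (x (k+1)) hpK
    have hfs : f k (xs k) ≤ f k (x (k+1)) := by
      simp only [sub_self, norm_zero] at h2; nlinarith
    -- firm nonexpansiveness
    have hfirm : ‖x (k+1) - x k‖ ^ 2 + ‖x (k+1) - xs k‖ ^ 2 ≤ ‖x k - xs k‖ ^ 2 := by
      have e1 : ‖xs k - x (k+1)‖ = ‖x (k+1) - xs k‖ := norm_sub_rev _ _
      have e2 : ‖xs k - x k‖ = ‖x k - xs k‖ := norm_sub_rev _ _
      rw [e1, e2] at h1
      nlinarith
    -- drift bound
    have hb : ‖x (k+1) - xs (k+1)‖ ≤ ‖x (k+1) - xs k‖ + δ := by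
      have : x (k+1) - xs (k+1) = (x (k+1) - xs k) + (xs k - xs (k+1)) := by abel
      rw [this]
      refine le_trans (norm_add_le _ _) ?_
      have : ‖xs k - xs (k+1)‖ = ‖xs (k+1) - xs k‖ := norm_sub_rev _ _
      rw [this]
      linarith [hdrift k]
    have h2X : ‖x (k+1) - xs k‖ ≤ 2 * X :=
      le_trans (norm_sub_le _ _) (by linarith [hKX k _ hpK, hKX k _ hsK])
    have hsq : ‖x (k+1) - xs (k+1)‖ ^ 2 ≤ (‖x (k+1) - xs k‖ + δ) ^ 2 :=
      pow_le_pow_left₀ (norm_nonneg _) hb 2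
    nlinarith [mul_le_mul_of_nonneg_right h2X hdel, norm_nonneg (x (k+1) - xs k)]
  have hsum : ∀ M : ℕ, ∑ k ∈ Finset.Icc 1 M, ‖x (k+1) - x k‖ ^ 2
      ≤ ‖x 1 - xs 1‖ ^ 2 - ‖x (M+1) - xs (M+1)‖ ^ 2 + M * (δ * (4 * X + δ)) := by
    intro M
    induction M with
    | zero => simp
    | succ n ih =>
      rw [Finset.sum_Icc_succ_top (by omega : 1 ≤ n + 1)]
      have hst := step (n+1) (by omega)
      push_cast
      linarith
  have hNpos : (0:ℝ) < N := by exact_mod_cast Nat.lt_of_lt_of_le Nat.zero_lt_one hN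
  have hS : ∑ k ∈ Finset.Icc 1 N, ‖x (k+1) - x k‖ ^ 2
      ≤ ‖x 1 - xs 1‖ ^ 2 + N * (δ * (4 * X + δ)) := by
    have := hsum N
    nlinarith [sq_nonneg ‖x (N+1) - xs (N+1)‖]
  have h1N : (0:ℝ) < 1 / (N:ℝ) := by positivity
  calc (1 / (N:ℝ)) * ∑ k ∈ Finset.Icc 1 N, ‖x (k+1) - x k‖ ^ 2
      ≤ (1 / (N:ℝ)) * (‖x 1 - xs 1‖ ^ 2 + N * (δ * (4 * X + δ))) :=
        mul_le_mul_of_nonneg_left hS h1N.le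
    _ = (1 / (N:ℝ)) * ‖x 1 - xs 1‖ ^ 2 + δ * (4 * X + δ) := by
        field_simp
end

section
/- [Running proximal point, tracking convergence] Let λ > 0 and m > 0. For k = 1, 2, … let f_k : E → ℝ be strongly convex with constant m_k ≥ m, and let K_k ⊆ E be nonempty closed convex sets. For each k let x*_k ∈ K_k minimize y ↦ f_k(y) + (1/(2λ))‖y − x*_k‖² over K_k, with ‖x*_{k+1} − x*_k‖ ≤ δ. Define the running proximal point iteration: x_{k+1} ∈ K_k is the minimizer over K_k of y ↦ f_k(y) + (1/(2λ))‖y − x_k‖². Set L_k = 1/(1 + m_k·λ) and L̄ = 1/(1 + m·λ). Then for every k ≥ 1: ‖x_k − x*_k‖ ≤ (L₁⋯L_{k−1})·‖x₁ − x*₁‖ + δ·(1 − L̄^{k−1})/(1 − L̄). -/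
open Filter Topology
open scoped RealInnerProductSpace

lemma quad_sc {E : Type*} [NormedAddCommGroup E] [InnerProductSpace ℝ E]
    (lam : ℝ) (hlam : 0 < lam) (x : E) :
    StrongConvexOn Set.univ (1/lam) (fun y => 1/(2*lam) * ‖y - x‖ ^ 2) := by
  rw [strongConvexOn_iff_convex]
  have heq : (fun y : E => 1/(2*lam) * ‖y - x‖ ^ 2 - (1/lam)/2 * ‖y‖ ^ 2)
      = fun y : E => ((-(1/lam)) • (innerSL ℝ x).toLinearMap) y + 1/(2*lam) * ‖x‖ ^ 2 := by
    funext y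
    simp only [LinearMap.smul_apply, ContinuousLinearMap.coe_coe, innerSL_apply_apply,
      smul_eq_mul, innerSL_apply_apply]
    rw [norm_sub_sq_real, real_inner_comm]
    field_simp
    ring
  rw [heq]
  exact (((-(1/lam)) • (innerSL ℝ x).toLinearMap).convexOn convex_univ).add
    (convexOn_const _ convex_univ)

lemma sc_growth {E : Type*} [NormedAddCommGroup E] [InnerProductSpace ℝ E]
    {μ : ℝ} {g : E → ℝ} (hg : StrongConvexOn Set.univ μ g)
    {K : Set E} (hKc : Convex ℝ K) {z y : E}
    (hz : z ∈ K) (hmin : ∀ w ∈ K, g z ≤ g w) (hy : y ∈ K) :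
    g z + μ / 2 * ‖y - z‖ ^ 2 ≤ g y := by
  have key : ∀ t : ℝ, t ∈ Set.Ioo (0:ℝ) 1 →
      μ / 2 * ((1 - t) * ‖z - y‖ ^ 2) ≤ g y - g z := by
    intro t ht
    obtain ⟨ht0, ht1⟩ := ht
    have hmem : (1 - t) • z + t • y ∈ K :=
      hKc hz hy (by linarith) ht0.le (by ring)
    have h1 : g ((1 - t) • z + t • y) ≤
        (1 - t) • g z + t • g y - (1 - t) * t * (μ / 2 * ‖z - y‖ ^ 2) :=
      hg.2 (Set.mem_univ z) (Set.mem_univ y) (by linarith) ht0.le (by ring)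
    have h2 := hmin _ hmem
    rw [smul_eq_mul, smul_eq_mul] at h1
    nlinarith [h1, h2, mul_pos ht0 (sub_pos.mpr ht1)]
  have hlim : Tendsto (fun t : ℝ => μ / 2 * ((1 - t) * ‖z - y‖ ^ 2)) (𝓝[>] (0:ℝ))
      (𝓝 (μ / 2 * ((1 - 0) * ‖z - y‖ ^ 2))) := by
    apply Tendsto.mono_left _ nhdsWithin_le_nhds
    exact (Continuous.tendsto (by continuity) 0)
  have hev : ∀ᶠ t in 𝓝[>] (0:ℝ), μ / 2 * ((1 - t) * ‖z - y‖ ^ 2) ≤ g y - g z := by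
    filter_upwards [Ioo_mem_nhdsGT_of_mem
      (by constructor <;> norm_num : (0:ℝ) ∈ Set.Ico 0 1)] with t ht
    exact key t ht
  have := le_of_tendsto hlim hev
  rw [norm_sub_rev] at this
  linarith

lemma prox_contraction {E : Type*} [NormedAddCommGroup E] [InnerProductSpace ℝ E]
    (lam μ : ℝ) (hlam : 0 < lam) (hμ : 0 ≤ μ)
    (f : E → ℝ) (hsc : ConvexOn ℝ Set.univ (fun y => f y - μ / 2 * ‖y‖ ^ 2))
    (K : Set E) (hKc : Convex ℝ K) (x u v : E) (hu : u ∈ K) (hv : v ∈ K)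
    (hum : ∀ y ∈ K, f u + 1/(2*lam) * ‖u - x‖ ^ 2 ≤ f y + 1/(2*lam) * ‖y - x‖ ^ 2)
    (hvm : ∀ y ∈ K, f v ≤ f y + 1/(2*lam) * ‖y - v‖ ^ 2) :
    ‖u - v‖ ≤ 1 / (1 + μ * lam) * ‖x - v‖ := by
  have hf : StrongConvexOn Set.univ μ f := strongConvexOn_iff_convex.mpr hsc
  have hadd : ∀ w : E, StrongConvexOn Set.univ (μ + 1/lam)
      (fun y => f y + 1/(2*lam) * ‖y - w‖ ^ 2) := by
    intro w
    have h := hf.add (quad_sc lam hlam w)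
    exact h.mono fun r => le_of_eq (by simp only [Pi.add_apply]; ring)
  have h1 := sc_growth (hadd x) hKc hu hum hv
  have h2 : (fun y => f y + 1/(2*lam) * ‖y - v‖ ^ 2) v +
        (μ + 1/lam) / 2 * ‖u - v‖ ^ 2 ≤ f u + 1/(2*lam) * ‖u - v‖ ^ 2 := by
    refine sc_growth (hadd v) hKc hv (fun w hw => ?_) hu
    simp only [sub_self, norm_zero]
    simpa using hvm w hw
  simp only [sub_self, norm_zero] at h2
  have hid : ‖v - x‖ ^ 2 - ‖u - x‖ ^ 2 + ‖u - v‖ ^ 2 = 2 * (inner ℝ (u - v) (x - v) : ℝ) := by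
    rw [norm_sub_sq_real, norm_sub_sq_real, norm_sub_sq_real, inner_sub_left,
      inner_sub_right, inner_sub_right, real_inner_self_eq_norm_sq]
    ring
  have hcs : (inner ℝ (u - v) (x - v) : ℝ) ≤ ‖u - v‖ * ‖x - v‖ := real_inner_le_norm _ _
  have hlam0 : lam ≠ 0 := ne_of_gt hlam
  have hid2 : 1/lam * (inner ℝ (u - v) (x - v) : ℝ)
      = 1/(2*lam) * ‖v - x‖ ^ 2 - 1/(2*lam) * ‖u - x‖ ^ 2 + 1/(2*lam) * ‖u - v‖ ^ 2 := by
    field_simp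
    linear_combination (-1) * hid
  have h3 : (μ + 1/lam) * ‖u - v‖ ^ 2 ≤ 1/lam * (inner ℝ (u - v) (x - v) : ℝ) := by
    rw [norm_sub_rev v u] at h1
    linarith [h1, h2, hid2]
  have h3' : (1 + μ * lam) * ‖u - v‖ ^ 2 ≤ (inner ℝ (u - v) (x - v) : ℝ) := by
    have h4 := mul_le_mul_of_nonneg_left h3 hlam.le
    have hinv : lam * (1/lam) = 1 := by field_simp
    rw [show lam * ((μ + 1/lam) * ‖u - v‖ ^ 2) = (1 + μ * lam) * ‖u - v‖ ^ 2 from by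
      linear_combination ‖u - v‖ ^ 2 * hinv,
      show lam * (1/lam * (inner ℝ (u - v) (x - v) : ℝ)) = (inner ℝ (u - v) (x - v) : ℝ) from by
      rw [one_div, mul_inv_cancel_left₀ hlam0]] at h4
    exact h4
  have hkey : (1 + μ * lam) * ‖u - v‖ ^ 2 ≤ ‖u - v‖ * ‖x - v‖ := le_trans h3' hcs
  have hpos : 0 < 1 + μ * lam := by nlinarith
  rcases eq_or_lt_of_le (norm_nonneg (u - v)) with h0 | h0
  · rw [← h0]; positivity
  · rw [one_div_mul_eq_div, le_div_iff₀ hpos]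
    nlinarith [hkey, h0]

/-- Running proximal point: tracking convergence under strong convexity. -/
theorem running_proximal_point_tracking
    {E : Type*} [NormedAddCommGroup E] [InnerProductSpace ℝ E] [CompleteSpace E]
    (lam m δ : ℝ) (hlam : 0 < lam) (hm : 0 < m)
    (f : ℕ → E → ℝ) (mk : ℕ → ℝ) (hmk : ∀ k, m ≤ mk k)
    (hsc : ∀ k, ConvexOn ℝ Set.univ (fun x => f k x - mk k / 2 * ‖x‖ ^ 2))
    (K : ℕ → Set E)
    (hK : ∀ k, (K k).Nonempty ∧ IsClosed (K k) ∧ Convex ℝ (K k))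
    (xs : ℕ → E)
    (hfix : ∀ k, xs k ∈ K k ∧
      ∀ y ∈ K k, f k (xs k) ≤ f k y + 1 / (2 * lam) * ‖y - xs k‖ ^ 2)
    (hdrift : ∀ k, ‖xs (k + 1) - xs k‖ ≤ δ)
    (x : ℕ → E)
    (hx : ∀ k ≥ 1, x (k + 1) ∈ K k ∧
      ∀ y ∈ K k, f k (x (k + 1)) + 1 / (2 * lam) * ‖x (k + 1) - x k‖ ^ 2
        ≤ f k y + 1 / (2 * lam) * ‖y - x k‖ ^ 2)
    (L : ℕ → ℝ) (hL : ∀ k, L k = 1 / (1 + mk k * lam))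
    (Lbar : ℝ) (hLbar : Lbar = 1 / (1 + m * lam))
    (k : ℕ) (hk : 1 ≤ k) :
    ‖x k - xs k‖ ≤ (∏ i ∈ Finset.Icc 1 (k - 1), L i) * ‖x 1 - xs 1‖
      + δ * (1 - Lbar ^ (k - 1)) / (1 - Lbar) := by
  have hδ0 : 0 ≤ δ := le_trans (norm_nonneg _) (hdrift 0)
  have hml : 0 < 1 + m * lam := by nlinarith
  have hLbar0 : 0 < Lbar := by rw [hLbar]; positivity
  have hLbar1 : Lbar < 1 := by
    rw [hLbar, div_lt_one hml]; nlinarith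
  have h1mLbar : 0 < 1 - Lbar := by linarith
  have hLkpos : ∀ j, 0 < L j := by
    intro j
    have : 0 < 1 + mk j * lam := by nlinarith [hmk j]
    rw [hL j]; positivity
  have hLkle : ∀ j, L j ≤ Lbar := by
    intro j
    rw [hL j, hLbar]
    apply one_div_le_one_div_of_le hml
    nlinarith [hmk j]
  have hcontr : ∀ j, 1 ≤ j → ‖x (j + 1) - xs j‖ ≤ L j * ‖x j - xs j‖ := by
    intro j hj
    obtain ⟨hKne, hKcl, hKcv⟩ := hK j
    obtain ⟨hu, hum⟩ := hx j hj
    obtain ⟨hv, hvm⟩ := hfix j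
    have hmkj : (0:ℝ) ≤ mk j := le_trans hm.le (hmk j)
    have := prox_contraction lam (mk j) hlam hmkj (f j) (hsc j) (K j) hKcv
      (x j) (x (j + 1)) (xs j) hu hv hum hvm
    rw [← hL j] at this
    exact this
  induction k, hk using Nat.le_induction with
  | base =>
    rw [show (1:ℕ) - 1 = 0 from rfl, Finset.Icc_eq_empty (by norm_num)]
    simp
  | succ n hn IH =>
    have hn1 : n + 1 - 1 = n := Nat.succ_sub_one n
    have hprod : ∏ i ∈ Finset.Icc 1 n, L i
        = (∏ i ∈ Finset.Icc 1 (n - 1), L i) * L n := by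
      conv_lhs => rw [show n = (n - 1) + 1 from (Nat.succ_pred_eq_of_pos hn).symm]
      rw [Finset.prod_Icc_succ_top (Nat.succ_le_succ (Nat.zero_le _))]
      rw [show n - 1 + 1 = n from by omega]
    set P := ∏ i ∈ Finset.Icc 1 (n - 1), L i with hP
    set q := Lbar ^ (n - 1) with hq
    have hq0 : 0 ≤ q := by positivity
    have hq1 : q ≤ 1 := pow_le_one₀ hLbar0.le hLbar1.le
    have hpow : Lbar ^ n = q * Lbar := by
      rw [hq, ← pow_succ, show n - 1 + 1 = n from by omega]
    have hP0 : 0 ≤ P := Finset.prod_nonneg fun i _ => (hLkpos i).le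
    -- triangle + contraction + drift
    have step1 : ‖x (n + 1) - xs (n + 1)‖ ≤ L n * ‖x n - xs n‖ + δ := by
      have htri : ‖x (n + 1) - xs (n + 1)‖
          ≤ ‖x (n + 1) - xs n‖ + ‖xs n - xs (n + 1)‖ :=
        norm_sub_le_norm_sub_add_norm_sub _ _ _
      have hd : ‖xs n - xs (n + 1)‖ ≤ δ := by
        rw [norm_sub_rev]; exact hdrift n
      linarith [hcontr n hn, htri, hd]
    have step2 : L n * ‖x n - xs n‖
        ≤ L n * (P * ‖x 1 - xs 1‖ + δ * (1 - q) / (1 - Lbar)) :=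
      mul_le_mul_of_nonneg_left IH (hLkpos n).le
    -- arithmetic on the geometric tail
    set c := (1 - Lbar)⁻¹ with hc
    have hc0 : 0 ≤ c := by positivity
    have hcid : (1 - Lbar) * c = 1 := mul_inv_cancel₀ (ne_of_gt h1mLbar)
    have hdc : δ * ((1 - Lbar) * c) = δ := by rw [hcid, mul_one]
    have h4 : 0 ≤ δ * c * (Lbar - L n) * (1 - q) := by
      apply mul_nonneg
      apply mul_nonneg (mul_nonneg hδ0 hc0)
      · linarith [hLkle n]
      · linarith
    have harith : L n * (δ * (1 - q) / (1 - Lbar)) + δ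
        ≤ δ * (1 - q * Lbar) / (1 - Lbar) := by
      rw [div_eq_mul_inv, div_eq_mul_inv, ← hc]
      nlinarith [h4, hdc]
    rw [hn1, hprod, hpow]
    calc ‖x (n + 1) - xs (n + 1)‖
        ≤ L n * ‖x n - xs n‖ + δ := step1
      _ ≤ L n * (P * ‖x 1 - xs 1‖ + δ * (1 - q) / (1 - Lbar)) + δ := by linarith
      _ ≤ P * L n * ‖x 1 - xs 1‖ + δ * (1 - q * Lbar) / (1 - Lbar) := by
          ring_nf
          nlinarith [harith]
end
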